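/- arXiv:2603.15388 — 4 statements merged into one kernel-verified Lean document; each statement's English description precedes it below -/
import Mathlib

section
/- In the finite phase-separated co-design model, fix behavior parameters θ₀ ∈ ℝ^m and φ₀ ∈ ℝ^n, and define the leader surrogate L_L(θ) = Σ_τ P(τ;θ₀,φ₀) · Σ_{t=0}^{T−1} γ^t (π_L(θ)(a_t|s_t)/π_L(θ₀)(a_t|s_t)) · A_L^{θ₀,φ₀,t}(s_t,a_t). Then the leader's direct gradient equals the surrogate gradient at the behavior parameters: ∇_θ J_L(θ,φ₀)|_{θ=θ₀} = ∇_θ L_L(θ)|_{θ=θ₀}. -/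
open scoped BigOperators

/-- A trajectory in the finite phase-separated co-design model, with leader horizon
`T + 1` (so `T + 1 ≥ 1`) and follower horizon `H + 1` (so `H + 1 ≥ 1`):
leader states `s 0, …, s (T+1)`, leader actions `a 0, …, a T`,
follower states `x 0, …, x H` and follower actions `b 0, …, b H`. -/
structure Traj (SL AL SF AF : Type) (T H : ℕ) where
  s : Fin (T + 2) → SL
  a : Fin (T + 1) → AL
  x : Fin (H + 1) → SF
  b : Fin (H + 1) → AF

instance instFintypeTraj (SL AL SF AF : Type) (T H : ℕ)
    [Fintype SL] [Fintype AL] [Fintype SF] [Fintype AF] :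
    Fintype (Traj SL AL SF AF T H) :=
  Fintype.ofEquiv
    ((Fin (T + 2) → SL) × (Fin (T + 1) → AL) × (Fin (H + 1) → SF) × (Fin (H + 1) → AF))
    { toFun := fun p => ⟨p.1, p.2.1, p.2.2.1, p.2.2.2⟩
      invFun := fun τ => ⟨τ.s, τ.a, τ.x, τ.b⟩
      left_inv := fun _ => rfl
      right_inv := fun _ => rfl }

variable {SL AL SF AF : Type} [Fintype SL] [Fintype AL] [Fintype SF] [Fintype AF]
variable {m n T H : ℕ}

/-- The terminal morphology `s_T` of a trajectory. -/
def Traj.z (τ : Traj SL AL SF AF T H) : SL := τ.s (Fin.last (T + 1))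

/-- Probability `P(τ; θ, φ)` of a trajectory. -/
def trajProb (μL : SL → ℝ) (PL : SL → AL → SL → ℝ) (μF : SL → SF → ℝ)
    (PF : SL → SF → AF → SF → ℝ) (πL : (Fin m → ℝ) → SL → AL → ℝ)
    (πF : (Fin n → ℝ) → SL → SF → AF → ℝ) (θ : Fin m → ℝ) (φ : Fin n → ℝ)
    (τ : Traj SL AL SF AF T H) : ℝ :=
  μL (τ.s 0) *
    (∏ t : Fin (T + 1),
      πL θ (τ.s t.castSucc) (τ.a t) * PL (τ.s t.castSucc) (τ.a t) (τ.s t.succ)) *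
    μF τ.z (τ.x 0) *
    (∏ k : Fin (H + 1), πF φ τ.z (τ.x k) (τ.b k)) *
    (∏ k : Fin H, PF τ.z (τ.x k.castSucc) (τ.b k.castSucc) (τ.x k.succ))

/-- Follower objective `J_F(θ, φ)`. -/
def JF (γ : ℝ) (μL : SL → ℝ) (PL : SL → AL → SL → ℝ) (μF : SL → SF → ℝ)
    (PF : SL → SF → AF → SF → ℝ) (RF : SL → SF → AF → ℝ)
    (πL : (Fin m → ℝ) → SL → AL → ℝ) (πF : (Fin n → ℝ) → SL → SF → AF → ℝ)
    (T H : ℕ) (θ : Fin m → ℝ) (φ : Fin n → ℝ) : ℝ :=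
  ∑ τ : Traj SL AL SF AF T H, trajProb μL PL μF PF πL πF θ φ τ *
    ∑ k : Fin (H + 1), γ ^ (k : ℕ) * RF τ.z (τ.x k) (τ.b k)

/-- Leader objective `J_L(θ, φ)`. -/
def JL (γ : ℝ) (μL : SL → ℝ) (PL : SL → AL → SL → ℝ) (μF : SL → SF → ℝ)
    (PF : SL → SF → AF → SF → ℝ) (RL : SL → AL → ℝ) (RF : SL → SF → AF → ℝ)
    (πL : (Fin m → ℝ) → SL → AL → ℝ) (πF : (Fin n → ℝ) → SL → SF → AF → ℝ)
    (T H : ℕ) (θ : Fin m → ℝ) (φ : Fin n → ℝ) : ℝ :=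
  ∑ τ : Traj SL AL SF AF T H, trajProb μL PL μF PF πL πF θ φ τ *
    ((∑ t : Fin (T + 1), γ ^ (t : ℕ) * RL (τ.s t.castSucc) (τ.a t)) +
      γ ^ (T + 1) * ∑ k : Fin (H + 1), γ ^ (k : ℕ) * RF τ.z (τ.x k) (τ.b k))

/-- Follower state-action value `Q_F^{φ,k}(x, b; z)`, written in terms of the number
`r` of remaining follower steps after the current one (at stage `k` of a follower
phase with horizon `H + 1`, one has `r = H - k`): the expectation of the discounted
reward-to-go `∑_{j = k}^{H} γ^{j - k} R_F(z, x_j, b_j)` over follower trajectories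
generated from `x, b` by `P_F(·|z,·,·)` and `π_F(φ)(·|·; z)`. -/
def Qrem (γ : ℝ) (PF : SL → SF → AF → SF → ℝ) (RF : SL → SF → AF → ℝ)
    (πF : (Fin n → ℝ) → SL → SF → AF → ℝ) (z : SL) (φ : Fin n → ℝ) :
    ℕ → SF → AF → ℝ
  | 0, x, b => RF z x b
  | r + 1, x, b => RF z x b +
      γ * ∑ x' : SF, PF z x b x' * ∑ b' : AF, πF φ z x' b' * Qrem γ PF RF πF z φ r x' b'

/-- Follower advantage `A_F^{φ,k}(x, b; z) = Q_F^{φ,k}(x, b; z) - V_F^{φ,k}(x; z)`,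
again indexed by the number `r = H - k` of remaining follower steps. -/
def advF (γ : ℝ) (PF : SL → SF → AF → SF → ℝ) (RF : SL → SF → AF → ℝ)
    (πF : (Fin n → ℝ) → SL → SF → AF → ℝ) (z : SL) (φ : Fin n → ℝ)
    (r : ℕ) (x : SF) (b : AF) : ℝ :=
  Qrem γ PF RF πF z φ r x b -
    ∑ b' : AF, πF φ z x b' * Qrem γ PF RF πF z φ r x b'

/-- Leader state-action value `Q_L^{θ,φ,t}(s, a)`, indexed by the number `r` of
remaining leader steps after the current one (at stage `t` of a leader phase with
horizon `T + 1`, one has `r = T - t`); the follower phase has horizon `H + 1`. -/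
def QLrem (γ : ℝ) (PL : SL → AL → SL → ℝ) (μF : SL → SF → ℝ)
    (PF : SL → SF → AF → SF → ℝ) (RL : SL → AL → ℝ) (RF : SL → SF → AF → ℝ)
    (πL : (Fin m → ℝ) → SL → AL → ℝ) (πF : (Fin n → ℝ) → SL → SF → AF → ℝ)
    (H : ℕ) (θ : Fin m → ℝ) (φ : Fin n → ℝ) : ℕ → SL → AL → ℝ
  | 0, s, a => RL s a + γ * ∑ z : SL, PL s a z *
      ∑ x : SF, μF z x * ∑ b : AF, πF φ z x b * Qrem γ PF RF πF z φ H x b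
  | r + 1, s, a => RL s a + γ * ∑ s' : SL, PL s a s' *
      ∑ a' : AL, πL θ s' a' * QLrem γ PL μF PF RL RF πL πF H θ φ r s' a'

/-- Leader advantage `A_L^{θ,φ,t}(s, a) = Q_L^{θ,φ,t}(s, a) - V_L^{θ,φ,t}(s)`,
indexed by the number `r = T - t` of remaining leader steps. -/
def advL (γ : ℝ) (PL : SL → AL → SL → ℝ) (μF : SL → SF → ℝ)
    (PF : SL → SF → AF → SF → ℝ) (RL : SL → AL → ℝ) (RF : SL → SF → AF → ℝ)
    (πL : (Fin m → ℝ) → SL → AL → ℝ) (πF : (Fin n → ℝ) → SL → SF → AF → ℝ)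
    (H : ℕ) (θ : Fin m → ℝ) (φ : Fin n → ℝ) (r : ℕ) (s : SL) (a : AL) : ℝ :=
  QLrem γ PL μF PF RL RF πL πF H θ φ r s a -
    ∑ a' : AL, πL θ s a' * QLrem γ PL μF PF RL RF πL πF H θ φ r s a'

/-!
Likelihood-ratio argument. Differentiating `P(τ; θ)` at `θ₀` in a direction `v` multiplies it by
the score `∑ₜ g(sₜ, aₜ)` with `g = (∇π_L · v) / π_L`, and `∑ₐ π_L(a|s) g(s, a) = 0` because
`π_L(·|s)` sums to one for every `θ`. So both gradients are sums over `t` of expectations of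
`g(sₜ, aₜ)` times, respectively, the total return and `γᵗ A_t(sₜ, aₜ)`, and these agree term by
term: against the mean-zero factor `g(sₜ, aₜ)`, the rewards collected before `t` contribute
nothing, the rest of the return averages to `γᵗ Q_t(sₜ, aₜ)`, and the baseline `γᵗ V_t(sₜ)`
contributes nothing. Both averaging steps are inductions on the leader horizon that peel off the
first leader step.
-/

theorem Fintype.sum_pi_fin_succ {S β : Type*} [Fintype S] [AddCommMonoid β] {k : ℕ}
    (f : (Fin (k + 1) → S) → β) :
    ∑ g : Fin (k + 1) → S, f g = ∑ s : S, ∑ g : Fin k → S, f (Fin.cons s g) := by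
  rw [← (Fin.consEquiv fun _ => S).sum_comp, Fintype.sum_prod_type]
  rfl

theorem Fintype.sum_mul_add_mul_of_sum_eq_one {ι : Type*} [Fintype ι] {p : ι → ℝ}
    (hp : ∑ i, p i = 1) (c d : ℝ) (f : ι → ℝ) :
    ∑ i, p i * (c + d * f i) = c + d * ∑ i, p i * f i := by
  simp only [mul_add, Finset.sum_add_distrib, ← Finset.sum_mul, hp, one_mul, Finset.mul_sum]
  exact congrArg _ (Finset.sum_congr rfl fun i _ => by ring)

set_option linter.unusedSectionVars false

section Follower

variable (PF : SL → SF → AF → SF → ℝ) (πF : (Fin n → ℝ) → SL → SF → AF → ℝ)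
  (φ : Fin n → ℝ) (z : SL)

def followerProb (ν : SF → ℝ) (x : Fin (H + 1) → SF) (b : Fin (H + 1) → AF) : ℝ :=
  ν (x 0) * (∏ k : Fin (H + 1), πF φ z (x k) (b k)) *
    ∏ k : Fin H, PF z (x k.castSucc) (b k.castSucc) (x k.succ)

def followerExpect (ν : SF → ℝ) (F : (Fin (H + 1) → SF) → (Fin (H + 1) → AF) → ℝ) : ℝ :=
  ∑ x, ∑ b, followerProb PF πF φ z ν x b * F x b

theorem followerProb_cons (ν : SF → ℝ) (x₀ : SF) (b₀ : AF) (x : Fin (H + 1) → SF)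
    (b : Fin (H + 1) → AF) :
    followerProb PF πF φ z ν (Fin.cons x₀ x : Fin (H + 2) → SF) (Fin.cons b₀ b) =
      ν x₀ * (πF φ z x₀ b₀ * followerProb PF πF φ z (PF z x₀ b₀) x b) := by
  simp only [followerProb, Fin.prod_univ_succ (n := H + 1), Fin.prod_univ_succ (n := H),
    Fin.cons_zero, Fin.cons_succ, Fin.castSucc_zero, ← Fin.succ_castSucc]
  ring

theorem followerExpect_succ (ν : SF → ℝ)
    (F : (Fin (H + 2) → SF) → (Fin (H + 2) → AF) → ℝ) :
    followerExpect PF πF φ z ν F = ∑ x₀, ν x₀ * ∑ b₀, πF φ z x₀ b₀ *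
      followerExpect PF πF φ z (PF z x₀ b₀) (fun x b => F (Fin.cons x₀ x) (Fin.cons b₀ b)) := by
  simp only [followerExpect, Fintype.sum_pi_fin_succ (k := H + 1), followerProb_cons,
    Finset.mul_sum]
  refine Finset.sum_congr rfl fun x₀ _ => ?_
  rw [Finset.sum_comm]
  exact Finset.sum_congr rfl fun b₀ _ => Finset.sum_congr rfl fun x _ =>
    Finset.sum_congr rfl fun b _ => by ring

theorem followerExpect_zero (ν : SF → ℝ) (F : (Fin 1 → SF) → (Fin 1 → AF) → ℝ) :
    followerExpect PF πF φ z ν F =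
      ∑ x₀, ν x₀ * ∑ b₀, πF φ z x₀ b₀ * F (Fin.cons x₀ default) (Fin.cons b₀ default) := by
  simp only [followerExpect, Fintype.sum_pi_fin_succ (k := 0), Fintype.sum_unique,
    Finset.mul_sum, followerProb, Fin.prod_univ_succ, Fin.prod_univ_zero, Fin.cons_zero]
  exact Finset.sum_congr rfl fun x₀ _ => Finset.sum_congr rfl fun b₀ _ => by ring

variable {PF πF φ z} (γ : ℝ) (RF : SL → SF → AF → ℝ)

theorem followerExpect_add_mul_return (hPF1 : ∀ x b, ∑ x', PF z x b x' = 1)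
    (hπF1 : ∀ x, ∑ b, πF φ z x b = 1) (c d : ℝ) (ν : SF → ℝ) :
    followerExpect PF πF φ z ν
        (fun x b => c + d * ∑ k : Fin (H + 1), γ ^ (k : ℕ) * RF z (x k) (b k)) =
      ∑ x, ν x * ∑ b, πF φ z x b * (c + d * Qrem γ PF RF πF z φ H x b) := by
  induction H generalizing c d ν with
  | zero =>
    simp [followerExpect_zero, Qrem]
  | succ H ih =>
    rw [followerExpect_succ]
    refine Finset.sum_congr rfl fun x₀ _ => congrArg _ <| Finset.sum_congr rfl fun b₀ _ => ?_
    have hsplit : ∀ (x : Fin (H + 1) → SF) (b : Fin (H + 1) → AF),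
        c + d * ∑ k : Fin (H + 2), γ ^ (k : ℕ) *
          RF z ((Fin.cons x₀ x : Fin (H + 2) → SF) k) ((Fin.cons b₀ b : Fin (H + 2) → AF) k) =
        (c + d * RF z x₀ b₀) + d * γ * ∑ k : Fin (H + 1), γ ^ (k : ℕ) * RF z (x k) (b k) := by
      intro x b
      simp only [Fin.sum_univ_succ (n := H + 1), Fin.cons_zero, Fin.cons_succ, Fin.val_zero,
        Fin.val_succ, pow_zero, pow_succ', mul_assoc, ← Finset.mul_sum]
      ring
    simp only [hsplit, ih, Qrem, Fintype.sum_mul_add_mul_of_sum_eq_one (hπF1 _),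
      Fintype.sum_mul_add_mul_of_sum_eq_one (hPF1 _ _)]
    ring

end Follower

namespace Traj

def cons (s₀ : SL) (a₀ : AL) (τ : Traj SL AL SF AF T H) : Traj SL AL SF AF (T + 1) H :=
  ⟨Fin.cons s₀ τ.s, Fin.cons a₀ τ.a, τ.x, τ.b⟩

@[simp]
theorem cons_s_zero (s₀ : SL) (a₀ : AL) (τ : Traj SL AL SF AF T H) : (τ.cons s₀ a₀).s 0 = s₀ :=
  rfl

@[simp]
theorem cons_a_zero (s₀ : SL) (a₀ : AL) (τ : Traj SL AL SF AF T H) : (τ.cons s₀ a₀).a 0 = a₀ :=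
  rfl

@[simp]
theorem cons_s_succ (s₀ : SL) (a₀ : AL) (τ : Traj SL AL SF AF T H) (i : Fin (T + 2)) :
    (τ.cons s₀ a₀).s i.succ = τ.s i :=
  rfl

@[simp]
theorem cons_a_succ (s₀ : SL) (a₀ : AL) (τ : Traj SL AL SF AF T H) (i : Fin (T + 1)) :
    (τ.cons s₀ a₀).a i.succ = τ.a i :=
  rfl

def consEquiv : SL × AL × Traj SL AL SF AF T H ≃ Traj SL AL SF AF (T + 1) H where
  toFun p := cons p.1 p.2.1 p.2.2
  invFun τ := (τ.s 0, τ.a 0, ⟨Fin.tail τ.s, Fin.tail τ.a, τ.x, τ.b⟩)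
  left_inv _ := by simp [cons]
  right_inv _ := by simp [cons]

def single (s₀ : SL) (a₀ : AL) (s₁ : SL) (x : Fin (H + 1) → SF) (b : Fin (H + 1) → AF) :
    Traj SL AL SF AF 0 H :=
  ⟨![s₀, s₁], ![a₀], x, b⟩

@[simp]
theorem single_s_zero (s₀ : SL) (a₀ : AL) (s₁ : SL) (x : Fin (H + 1) → SF)
    (b : Fin (H + 1) → AF) : (single s₀ a₀ s₁ x b).s 0 = s₀ :=
  rfl

@[simp]
theorem single_a_zero (s₀ : SL) (a₀ : AL) (s₁ : SL) (x : Fin (H + 1) → SF)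
    (b : Fin (H + 1) → AF) : (single s₀ a₀ s₁ x b).a 0 = a₀ :=
  rfl

def singleEquiv :
    SL × AL × SL × (Fin (H + 1) → SF) × (Fin (H + 1) → AF) ≃ Traj SL AL SF AF 0 H where
  toFun p := single p.1 p.2.1 p.2.2.1 p.2.2.2.1 p.2.2.2.2
  invFun τ := (τ.s 0, τ.a 0, τ.s 1, τ.x, τ.b)
  left_inv _ := rfl
  right_inv τ := by
    cases τ
    simp only [single, mk.injEq, and_true]
    constructor <;> funext i <;> fin_cases i <;> rfl

theorem sum_eq_sum_cons {β : Type*} [AddCommMonoid β] (f : Traj SL AL SF AF (T + 1) H → β) :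
    ∑ τ, f τ = ∑ s₀, ∑ a₀, ∑ τ, f (cons s₀ a₀ τ) := by
  simp only [← consEquiv.sum_comp, Fintype.sum_prod_type]
  rfl

theorem sum_eq_sum_single {β : Type*} [AddCommMonoid β] (f : Traj SL AL SF AF 0 H → β) :
    ∑ τ, f τ = ∑ s₀, ∑ a₀, ∑ s₁, ∑ x, ∑ b, f (single s₀ a₀ s₁ x b) := by
  simp only [← singleEquiv.sum_comp, Fintype.sum_prod_type]
  rfl

end Traj

section Leader

variable (PL : SL → AL → SL → ℝ) (μF : SL → SF → ℝ) (PF : SL → SF → AF → SF → ℝ)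
  (πL : (Fin m → ℝ) → SL → AL → ℝ) (πF : (Fin n → ℝ) → SL → SF → AF → ℝ)
  (θ : Fin m → ℝ) (φ : Fin n → ℝ)

theorem trajProb_cons (ν : SL → ℝ) (s₀ : SL) (a₀ : AL) (τ : Traj SL AL SF AF T H) :
    trajProb ν PL μF PF πL πF θ φ (τ.cons s₀ a₀) =
      ν s₀ * (πL θ s₀ a₀ * trajProb (PL s₀ a₀) PL μF PF πL πF θ φ τ) := by
  simp only [trajProb, Traj.cons, Traj.z, Fin.prod_univ_succ (n := T + 1), Fin.cons_zero,
    Fin.cons_succ, Fin.castSucc_zero, ← Fin.succ_castSucc, ← Fin.succ_last]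
  ring

theorem trajProb_single (ν : SL → ℝ) (s₀ : SL) (a₀ : AL) (s₁ : SL) (x : Fin (H + 1) → SF)
    (b : Fin (H + 1) → AF) :
    trajProb ν PL μF PF πL πF θ φ (Traj.single s₀ a₀ s₁ x b) =
      ν s₀ * (πL θ s₀ a₀ * (PL s₀ a₀ s₁ * followerProb PF πF φ s₁ (μF s₁) x b)) := by
  simp only [trajProb, followerProb, Traj.single, Traj.z, Nat.reduceAdd, Finset.univ_unique,
    Fin.default_eq_zero, Finset.prod_singleton, Fin.castSucc_zero, Fin.reduceLast,
    Matrix.cons_val_zero, Matrix.cons_val_one, Matrix.cons_val_fin_one, Matrix.cons_val_succ]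
  ring

-- `ν` is an arbitrary initial weight: peeling off the first leader step replaces `μ_L` by
-- `P_L(·|s₀, a₀)`.
def trajExpect (ν : SL → ℝ) (F : Traj SL AL SF AF T H → ℝ) : ℝ :=
  ∑ τ, trajProb ν PL μF PF πL πF θ φ τ * F τ

theorem trajExpect_succ (ν : SL → ℝ) (F : Traj SL AL SF AF (T + 1) H → ℝ) :
    trajExpect PL μF PF πL πF θ φ ν F = ∑ s₀, ν s₀ * ∑ a₀, πL θ s₀ a₀ *
      trajExpect PL μF PF πL πF θ φ (PL s₀ a₀) (fun τ => F (τ.cons s₀ a₀)) := by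
  simp only [trajExpect, Traj.sum_eq_sum_cons, trajProb_cons, Finset.mul_sum, mul_assoc]

theorem trajExpect_zero (ν : SL → ℝ) (F : Traj SL AL SF AF 0 H → ℝ) :
    trajExpect PL μF PF πL πF θ φ ν F = ∑ s₀, ν s₀ * ∑ a₀, πL θ s₀ a₀ * ∑ s₁, PL s₀ a₀ s₁ *
      followerExpect PF πF φ s₁ (μF s₁) (fun x b => F (Traj.single s₀ a₀ s₁ x b)) := by
  simp only [trajExpect, followerExpect, Traj.sum_eq_sum_single, trajProb_single,
    Finset.mul_sum, mul_assoc]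

theorem trajExpect_sub (ν : SL → ℝ) (F G : Traj SL AL SF AF T H → ℝ) :
    trajExpect PL μF PF πL πF θ φ ν F - trajExpect PL μF PF πL πF θ φ ν G =
      trajExpect PL μF PF πL πF θ φ ν (F - G) := by
  simp only [trajExpect, ← Finset.sum_sub_distrib, Pi.sub_apply, mul_sub]

end Leader

def trajReturn (γ : ℝ) (RL : SL → AL → ℝ) (RF : SL → SF → AF → ℝ)
    (τ : Traj SL AL SF AF T H) : ℝ :=
  (∑ t : Fin (T + 1), γ ^ (t : ℕ) * RL (τ.s t.castSucc) (τ.a t)) +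
    γ ^ (T + 1) * ∑ k : Fin (H + 1), γ ^ (k : ℕ) * RF τ.z (τ.x k) (τ.b k)

theorem trajReturn_cons (γ : ℝ) (RL : SL → AL → ℝ) (RF : SL → SF → AF → ℝ) (s₀ : SL)
    (a₀ : AL) (τ : Traj SL AL SF AF T H) :
    trajReturn γ RL RF (τ.cons s₀ a₀) = RL s₀ a₀ + γ * trajReturn γ RL RF τ := by
  simp only [trajReturn, Traj.cons, Traj.z, Fin.sum_univ_succ (n := T + 1), Fin.cons_zero,
    Fin.cons_succ, Fin.castSucc_zero, ← Fin.succ_castSucc, ← Fin.succ_last, Fin.val_zero,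
    Fin.val_succ, pow_zero, one_mul, pow_succ', mul_assoc, ← Finset.mul_sum]
  ring

theorem trajReturn_single (γ : ℝ) (RL : SL → AL → ℝ) (RF : SL → SF → AF → ℝ) (s₀ : SL)
    (a₀ : AL) (s₁ : SL) (x : Fin (H + 1) → SF) (b : Fin (H + 1) → AF) :
    trajReturn γ RL RF (Traj.single s₀ a₀ s₁ x b) =
      RL s₀ a₀ + γ * ∑ k : Fin (H + 1), γ ^ (k : ℕ) * RF s₁ (x k) (b k) := by
  simp [trajReturn, Traj.single, Traj.z]

theorem JL_eq_trajExpect (γ : ℝ) (μL : SL → ℝ) (PL : SL → AL → SL → ℝ) (μF : SL → SF → ℝ)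
    (PF : SL → SF → AF → SF → ℝ) (RL : SL → AL → ℝ) (RF : SL → SF → AF → ℝ)
    (πL : (Fin m → ℝ) → SL → AL → ℝ) (πF : (Fin n → ℝ) → SL → SF → AF → ℝ)
    (θ : Fin m → ℝ) (φ : Fin n → ℝ) :
    JL γ μL PL μF PF RL RF πL πF T H θ φ =
      trajExpect PL μF PF πL πF θ φ μL (trajReturn (T := T) (H := H) γ RL RF) :=
  rfl

section Value

variable {PL : SL → AL → SL → ℝ} {μF : SL → SF → ℝ} {PF : SL → SF → AF → SF → ℝ}
  {πL : (Fin m → ℝ) → SL → AL → ℝ} {πF : (Fin n → ℝ) → SL → SF → AF → ℝ}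
  {θ : Fin m → ℝ} {φ : Fin n → ℝ} (γ : ℝ) (RL : SL → AL → ℝ) (RF : SL → SF → AF → ℝ)

theorem trajExpect_add_mul_trajReturn (hPL1 : ∀ s a, ∑ s', PL s a s' = 1)
    (hμF1 : ∀ z, ∑ x, μF z x = 1) (hPF1 : ∀ z x b, ∑ x', PF z x b x' = 1)
    (hπL1 : ∀ s, ∑ a, πL θ s a = 1) (hπF1 : ∀ z x, ∑ b, πF φ z x b = 1)
    (u w : SL → AL → ℝ) (ν : SL → ℝ) :
    trajExpect PL μF PF πL πF θ φ ν
        (fun τ : Traj SL AL SF AF T H =>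
          u (τ.s 0) (τ.a 0) + w (τ.s 0) (τ.a 0) * trajReturn γ RL RF τ) =
      ∑ s, ν s * ∑ a, πL θ s a * (u s a + w s a * QLrem γ PL μF PF RL RF πL πF H θ φ T s a) := by
  induction T generalizing u w ν with
  | zero =>
    rw [trajExpect_zero]
    refine Finset.sum_congr rfl fun s₀ _ => congrArg _ <| Finset.sum_congr rfl fun a₀ _ => ?_
    have hsplit : ∀ s₁ x b, u s₀ a₀ + w s₀ a₀ * trajReturn γ RL RF (Traj.single s₀ a₀ s₁ x b) =
        (u s₀ a₀ + w s₀ a₀ * RL s₀ a₀) +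
          w s₀ a₀ * γ * ∑ k : Fin (H + 1), γ ^ (k : ℕ) * RF s₁ (x k) (b k) := fun s₁ x b => by
      rw [trajReturn_single]
      ring
    simp only [Traj.single_s_zero, Traj.single_a_zero, hsplit,
      followerExpect_add_mul_return γ RF (hPF1 _) (hπF1 _),
      Fintype.sum_mul_add_mul_of_sum_eq_one (hπF1 _ _),
      Fintype.sum_mul_add_mul_of_sum_eq_one (hμF1 _),
      Fintype.sum_mul_add_mul_of_sum_eq_one (hPL1 _ _), QLrem]
    ring
  | succ T ih =>
    rw [trajExpect_succ]
    refine Finset.sum_congr rfl fun s₀ _ => congrArg _ <| Finset.sum_congr rfl fun a₀ _ => ?_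
    have hsplit : ∀ τ : Traj SL AL SF AF T H,
        u s₀ a₀ + w s₀ a₀ * trajReturn γ RL RF (τ.cons s₀ a₀) =
          (u s₀ a₀ + w s₀ a₀ * RL s₀ a₀) + w s₀ a₀ * γ * trajReturn γ RL RF τ := fun τ => by
      rw [trajReturn_cons]
      ring
    have ih₀ := ih (fun _ _ => u s₀ a₀ + w s₀ a₀ * RL s₀ a₀) (fun _ _ => w s₀ a₀ * γ) (PL s₀ a₀)
    simp only [Traj.cons_s_zero, Traj.cons_a_zero, hsplit, ih₀,
      Fintype.sum_mul_add_mul_of_sum_eq_one (hπL1 _),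
      Fintype.sum_mul_add_mul_of_sum_eq_one (hPL1 _ _), QLrem]
    ring

end Value

section Score

variable {PL : SL → AL → SL → ℝ} {μF : SL → SF → ℝ} {PF : SL → SF → AF → SF → ℝ}
  {πL : (Fin m → ℝ) → SL → AL → ℝ} {πF : (Fin n → ℝ) → SL → SF → AF → ℝ}
  {θ : Fin m → ℝ} {φ : Fin n → ℝ} (γ : ℝ) (RL : SL → AL → ℝ) (RF : SL → SF → AF → ℝ)
  (hPL1 : ∀ s a, ∑ s', PL s a s' = 1) (hμF1 : ∀ z, ∑ x, μF z x = 1)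
  (hPF1 : ∀ z x b, ∑ x', PF z x b x' = 1) (hπL1 : ∀ s, ∑ a, πL θ s a = 1)
  (hπF1 : ∀ z x, ∑ b, πF φ z x b = 1) {g : SL → AL → ℝ} (hg : ∀ s, ∑ a, πL θ s a * g s a = 0)
include hPL1 hμF1 hPF1 hπL1 hπF1 hg

theorem trajExpect_score_mul_trajReturn_sub_advL_zero (c d : ℝ) (ν : SL → ℝ) :
    trajExpect PL μF PF πL πF θ φ ν (fun τ : Traj SL AL SF AF T H =>
      g (τ.s 0) (τ.a 0) * (c + d * (trajReturn γ RL RF τ -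
        advL γ PL μF PF RL RF πL πF H θ φ T (τ.s 0) (τ.a 0)))) = 0 := by
  have hvalue := trajExpect_add_mul_trajReturn (T := T) (H := H) γ RL RF hPL1 hμF1 hPF1 hπL1
    hπF1 (fun s a => g s a * c - d * g s a * advL γ PL μF PF RL RF πL πF H θ φ T s a)
    (fun s a => d * g s a) ν
  refine Eq.trans ?_ (hvalue.trans (Finset.sum_eq_zero fun s _ => ?_))
  · exact congrArg _ (funext fun τ => by ring)
  · simp only [advL]
    calc ν s * ∑ a, πL θ s a * _ = ν s * ((∑ a, πL θ s a * g s a) * (c + d *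
          ∑ a', πL θ s a' * QLrem γ PL μF PF RL RF πL πF H θ φ T s a')) := by
          rw [Finset.sum_mul]
          exact congrArg _ (Finset.sum_congr rfl fun a _ => by ring)
      _ = 0 := by rw [hg, zero_mul, mul_zero]

-- The offset `c` absorbs the rewards collected before step `t` as the induction peels them off.
theorem trajExpect_score_mul_trajReturn_sub_advL (t : Fin (T + 1)) (c d : ℝ) (ν : SL → ℝ) :
    trajExpect PL μF PF πL πF θ φ ν (fun τ : Traj SL AL SF AF T H =>
      g (τ.s t.castSucc) (τ.a t) * (c + d * (trajReturn γ RL RF τ - γ ^ (t : ℕ) *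
        advL γ PL μF PF RL RF πL πF H θ φ (T - t) (τ.s t.castSucc) (τ.a t)))) = 0 := by
  induction T generalizing c d ν with
  | zero =>
    cases t using Fin.cases with
    | zero =>
      simpa using
        trajExpect_score_mul_trajReturn_sub_advL_zero γ RL RF hPL1 hμF1 hPF1 hπL1 hπF1 hg c d ν
    | succ t => exact t.elim0
  | succ T ih =>
    cases t using Fin.cases with
    | zero =>
      simpa using
        trajExpect_score_mul_trajReturn_sub_advL_zero γ RL RF hPL1 hμF1 hPF1 hπL1 hπF1 hg c d ν
    | succ t =>
      rw [trajExpect_succ]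
      refine Finset.sum_eq_zero fun s₀ _ => ?_
      rw [Finset.sum_eq_zero fun a₀ _ => ?_, mul_zero]
      refine mul_eq_zero_of_right _ ?_
      rw [← ih t (c + d * RL s₀ a₀) (d * γ) (PL s₀ a₀)]
      refine congrArg _ (funext fun τ => ?_)
      simp only [trajReturn_cons, ← Fin.succ_castSucc, Traj.cons_s_succ, Traj.cons_a_succ,
        Fin.val_succ, Nat.add_sub_add_right, pow_succ']
      ring

end Score

theorem sum_fderiv_apply_eq_zero_of_sum_eq_one {ι E : Type*} [Fintype ι]
    [NormedAddCommGroup E] [NormedSpace ℝ E] {p : E → ι → ℝ} (hp : ∀ x, ∑ i, p x i = 1)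
    {x₀ : E} (hd : ∀ i, DifferentiableAt ℝ (p · i) x₀) (v : E) :
    ∑ i, fderiv ℝ (p · i) x₀ v = 0 := by
  rw [← sum_apply, ← fderiv_fun_sum fun i _ => hd i]
  simp [hp]

theorem HasFDerivAt.fun_prod_mul_const {ι E : Type*} [Fintype ι] [DecidableEq ι]
    [NormedAddCommGroup E] [NormedSpace ℝ E] {f : ι → E → ℝ} {f' : ι → E →L[ℝ] ℝ} {x : E}
    (hf : ∀ i, HasFDerivAt (f i) (f' i) x) (hx : ∀ i, f i x ≠ 0) (c : ι → ℝ) :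
    HasFDerivAt (fun y => ∏ i, f i y * c i)
      ((∏ i, f i x * c i) • ∑ i, (f i x)⁻¹ • f' i) x := by
  refine (HasFDerivAt.finsetProd fun i _ => (hf i).mul_const (c i)).congr_fderiv ?_
  rw [Finset.smul_sum]
  refine Finset.sum_congr rfl fun i _ => ?_
  rw [smul_smul, smul_smul, ← Finset.mul_prod_erase _ _ (Finset.mem_univ i)]
  congr 1
  field_simp [hx i]

noncomputable def policyScore (πL : (Fin m → ℝ) → SL → AL → ℝ) (θ v : Fin m → ℝ) (s : SL)
    (a : AL) : ℝ :=
  fderiv ℝ (fun θ' => πL θ' s a) θ v / πL θ s a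

theorem sum_mul_policyScore_eq_zero {πL : (Fin m → ℝ) → SL → AL → ℝ} {θ : Fin m → ℝ} {s : SL}
    (hπ : ∀ a, πL θ s a ≠ 0) (hπ1 : ∀ θ', ∑ a, πL θ' s a = 1)
    (hd : ∀ a, DifferentiableAt ℝ (fun θ' => πL θ' s a) θ) (v : Fin m → ℝ) :
    ∑ a, πL θ s a * policyScore πL θ v s a = 0 := by
  simp only [policyScore, mul_div_cancel₀ _ (hπ _)]
  exact sum_fderiv_apply_eq_zero_of_sum_eq_one hπ1 hd v

section Derivative

variable (ν : SL → ℝ) (PL : SL → AL → SL → ℝ) (μF : SL → SF → ℝ) (PF : SL → SF → AF → SF → ℝ)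
  {πL : (Fin m → ℝ) → SL → AL → ℝ} (πF : (Fin n → ℝ) → SL → SF → AF → ℝ)
  {θ₀ : Fin m → ℝ} (φ : Fin n → ℝ)

theorem hasFDerivAt_trajProb (hπ : ∀ s a, πL θ₀ s a ≠ 0)
    (hd : ∀ s a, DifferentiableAt ℝ (fun θ => πL θ s a) θ₀) (τ : Traj SL AL SF AF T H) :
    HasFDerivAt (fun θ => trajProb ν PL μF PF πL πF θ φ τ)
      (trajProb ν PL μF PF πL πF θ₀ φ τ • ∑ t : Fin (T + 1),
        (πL θ₀ (τ.s t.castSucc) (τ.a t))⁻¹ • fderiv ℝ (fun θ => πL θ (τ.s t.castSucc) (τ.a t)) θ₀)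
      θ₀ := by
  classical
  have hprod := HasFDerivAt.fun_prod_mul_const (fun t => (hd (τ.s t.castSucc) (τ.a t)).hasFDerivAt)
    (fun t => hπ _ _) (fun t => PL (τ.s t.castSucc) (τ.a t) (τ.s t.succ))
  refine ((((hprod.const_mul (ν (τ.s 0))).mul_const _).mul_const _).mul_const _).congr_fderiv ?_
  simp only [smul_smul, trajProb]
  congr 1
  ring

theorem fderiv_trajExpect_apply (hπ : ∀ s a, πL θ₀ s a ≠ 0)
    (hd : ∀ s a, DifferentiableAt ℝ (fun θ => πL θ s a) θ₀) (F : Traj SL AL SF AF T H → ℝ)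
    (v : Fin m → ℝ) :
    fderiv ℝ (fun θ => trajExpect PL μF PF πL πF θ φ ν F) θ₀ v =
      ∑ t : Fin (T + 1), trajExpect PL μF PF πL πF θ₀ φ ν
        (fun τ => policyScore πL θ₀ v (τ.s t.castSucc) (τ.a t) * F τ) := by
  unfold trajExpect
  rw [(HasFDerivAt.fun_sum fun τ _ =>
    (hasFDerivAt_trajProb ν PL μF PF πF φ hπ hd τ).mul_const (F τ)).fderiv]
  simp only [policyScore, sum_apply, smul_apply, smul_eq_mul, Finset.mul_sum]
  rw [Finset.sum_comm]
  exact Finset.sum_congr rfl fun t _ => Finset.sum_congr rfl fun τ _ => by ring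

theorem fderiv_importanceWeighted_apply
    (hd : ∀ s a, DifferentiableAt ℝ (fun θ => πL θ s a) θ₀) (γ : ℝ) (A : ℕ → SL → AL → ℝ)
    (v : Fin m → ℝ) :
    fderiv ℝ (fun θ => ∑ τ : Traj SL AL SF AF T H, trajProb ν PL μF PF πL πF θ₀ φ τ *
        ∑ t : Fin (T + 1), γ ^ (t : ℕ) *
          (πL θ (τ.s t.castSucc) (τ.a t) / πL θ₀ (τ.s t.castSucc) (τ.a t)) *
          A t (τ.s t.castSucc) (τ.a t)) θ₀ v =
      ∑ t : Fin (T + 1), trajExpect PL μF PF πL πF θ₀ φ ν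
        (fun τ : Traj SL AL SF AF T H => policyScore πL θ₀ v (τ.s t.castSucc) (τ.a t) *
          (γ ^ (t : ℕ) * A t (τ.s t.castSucc) (τ.a t))) := by
  simp only [div_eq_mul_inv]
  rw [(HasFDerivAt.fun_sum fun τ _ => (HasFDerivAt.fun_sum fun t _ =>
    (((hd _ _).hasFDerivAt.mul_const _).const_mul _).mul_const _).const_mul _).fderiv]
  simp only [trajExpect, policyScore, sum_apply,
    smul_apply, smul_eq_mul, Finset.mul_sum]
  rw [Finset.sum_comm]
  exact Finset.sum_congr rfl fun t _ => Finset.sum_congr rfl fun τ _ => by ring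

end Derivative

theorem leader_direct_gradient_surrogate_general
    {SL AL SF AF : Type} [Fintype SL] [Fintype AL] [Fintype SF] [Fintype AF]
    {m n T H : ℕ} (γ : ℝ)
    (μL : SL → ℝ)
    (PL : SL → AL → SL → ℝ)
    (hPL1 : ∀ s a, ∑ s' : SL, PL s a s' = 1)
    (μF : SL → SF → ℝ) (hμF1 : ∀ z, ∑ x : SF, μF z x = 1)
    (PF : SL → SF → AF → SF → ℝ)
    (hPF1 : ∀ z x b, ∑ x' : SF, PF z x b x' = 1)
    (RL : SL → AL → ℝ) (RF : SL → SF → AF → ℝ)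
    (πL : (Fin m → ℝ) → SL → AL → ℝ) (hπL0 : ∀ θ s a, 0 < πL θ s a)
    (hπL1 : ∀ θ s, ∑ a : AL, πL θ s a = 1)
    (hπLC : ∀ s a, ContDiff ℝ 2 fun θ : Fin m → ℝ => πL θ s a)
    (πF : (Fin n → ℝ) → SL → SF → AF → ℝ)
    (hπF1 : ∀ φ z x, ∑ b : AF, πF φ z x b = 1)
    (θ₀ : Fin m → ℝ) (φ₀ : Fin n → ℝ) :
    fderiv ℝ (fun θ : Fin m → ℝ => JL γ μL PL μF PF RL RF πL πF T H θ φ₀) θ₀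
      =
    fderiv ℝ (fun θ : Fin m → ℝ =>
        ∑ τ : Traj SL AL SF AF T H,
          trajProb μL PL μF PF πL πF θ₀ φ₀ τ *
            ∑ t : Fin (T + 1), γ ^ (t : ℕ) *
              (πL θ (τ.s t.castSucc) (τ.a t) / πL θ₀ (τ.s t.castSucc) (τ.a t)) *
              advL γ PL μF PF RL RF πL πF H θ₀ φ₀ (T - (t : ℕ))
                (τ.s t.castSucc) (τ.a t)) θ₀ := by
  have hd : ∀ s a, DifferentiableAt ℝ (fun θ => πL θ s a) θ₀ :=
    fun s a => (hπLC s a).differentiable (by norm_num) θ₀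
  have hπ : ∀ s a, πL θ₀ s a ≠ 0 := fun s a => (hπL0 θ₀ s a).ne'
  ext v
  simp only [JL_eq_trajExpect]
  rw [fderiv_trajExpect_apply μL PL μF PF πF φ₀ hπ hd,
    fderiv_importanceWeighted_apply μL PL μF PF πF φ₀ hd γ
      (fun t => advL γ PL μF PF RL RF πL πF H θ₀ φ₀ (T - t))]
  refine Finset.sum_congr rfl fun t _ => ?_
  rw [← sub_eq_zero, trajExpect_sub, ← trajExpect_score_mul_trajReturn_sub_advL γ RL RF hPL1
    hμF1 hPF1 (hπL1 θ₀) (hπF1 φ₀)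
    (fun s => sum_mul_policyScore_eq_zero (hπ s) (hπL1 · s) (hd s) v) t 0 1 μL]
  exact congrArg _ (funext fun τ => by simp only [Pi.sub_apply]; ring)

/-- The leader's direct gradient `∇_θ J_L(θ, φ₀)|_{θ = θ₀}` equals
the gradient of the leader surrogate `L_L` at the behavior parameters. -/
theorem leader_direct_gradient_surrogate
    {SL AL SF AF : Type} [Fintype SL] [Fintype AL] [Fintype SF] [Fintype AF]
    [Nonempty SL] [Nonempty AL] [Nonempty SF] [Nonempty AF]
    {m n T H : ℕ} (γ : ℝ) (hγ0 : 0 < γ) (hγ1 : γ ≤ 1)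
    (μL : SL → ℝ) (hμL0 : ∀ s, 0 ≤ μL s) (hμL1 : ∑ s : SL, μL s = 1)
    (PL : SL → AL → SL → ℝ) (hPL0 : ∀ s a s', 0 ≤ PL s a s')
    (hPL1 : ∀ s a, ∑ s' : SL, PL s a s' = 1)
    (μF : SL → SF → ℝ) (hμF0 : ∀ z x, 0 ≤ μF z x) (hμF1 : ∀ z, ∑ x : SF, μF z x = 1)
    (PF : SL → SF → AF → SF → ℝ) (hPF0 : ∀ z x b x', 0 ≤ PF z x b x')
    (hPF1 : ∀ z x b, ∑ x' : SF, PF z x b x' = 1)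
    (RL : SL → AL → ℝ) (RF : SL → SF → AF → ℝ)
    (πL : (Fin m → ℝ) → SL → AL → ℝ) (hπL0 : ∀ θ s a, 0 < πL θ s a)
    (hπL1 : ∀ θ s, ∑ a : AL, πL θ s a = 1)
    (hπLC : ∀ s a, ContDiff ℝ 2 fun θ : Fin m → ℝ => πL θ s a)
    (πF : (Fin n → ℝ) → SL → SF → AF → ℝ) (hπF0 : ∀ φ z x b, 0 < πF φ z x b)
    (hπF1 : ∀ φ z x, ∑ b : AF, πF φ z x b = 1)
    (hπFC : ∀ z x b, ContDiff ℝ 2 fun φ : Fin n → ℝ => πF φ z x b)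
    (θ₀ : Fin m → ℝ) (φ₀ : Fin n → ℝ) :
    fderiv ℝ (fun θ : Fin m → ℝ => JL γ μL PL μF PF RL RF πL πF T H θ φ₀) θ₀
      =
    fderiv ℝ (fun θ : Fin m → ℝ =>
        ∑ τ : Traj SL AL SF AF T H,
          trajProb μL PL μF PF πL πF θ₀ φ₀ τ *
            ∑ t : Fin (T + 1), γ ^ (t : ℕ) *
              (πL θ (τ.s t.castSucc) (τ.a t) / πL θ₀ (τ.s t.castSucc) (τ.a t)) *
              advL γ PL μF PF RL RF πL πF H θ₀ φ₀ (T - (t : ℕ))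
                (τ.s t.castSucc) (τ.a t)) θ₀ :=
  leader_direct_gradient_surrogate_general γ μL PL hPL1 μF hμF1 PF hPF1 RL RF πL hπL0 hπL1 hπLC πF
    hπF1 θ₀ φ₀
end

section
/- In the finite phase-separated co-design model, define the discounted reward-to-go W_k(τ) = Σ_{j=k}^{H−1} γ^j R_F(s_T,x_j,b_j) and the per-step log-likelihood ℓ_k(φ,τ) = log π_F(φ)(b_k|x_k;s_T). Then for all θ ∈ ℝ^m and φ ∈ ℝ^n (assuming the follower policy is three times continuously differentiable in φ so that the Hessian exists), the Hessian of the follower objective in φ decomposes as ∇²_φ J_F(θ,φ) = Σ_τ P(τ;θ,φ) · ∇²_φ(Σ_{k=0}^{H−1} ℓ_k(φ,τ)·W_k(τ)) + Σ_τ P(τ;θ,φ) · ∇_φ(Σ_{k=0}^{H−1} ℓ_k(φ,τ)) · (∇_φ(Σ_{k=0}^{H−1} ℓ_k(φ,τ)·W_k(τ)))ᵀ. -/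
/-! The log-derivative trick `∇P = P ∇log P` gives `∇J_F = E[∇(∑ₖ ℓₖ) · ∑ⱼ γʲ R_F]`. Each
score `∇ℓₖ` has zero mean given the history up to `xₖ`, because `∑_b ∇π_F(b|x) = ∇1 = 0`; so the
rewards earned before step `k` can be dropped from its weight, and `∇J_F = E[∇(∑ₖ ℓₖ Wₖ)]`.
Differentiating this expectation once more, the product rule and the log-derivative trick give
the two terms of the Hessian. -/

open scoped BigOperators

variable {SL AL SF AF : Type} [Fintype SL] [Fintype AL] [Fintype SF] [Fintype AF]
variable {m n T H : ℕ}

set_option linter.unusedSectionVars false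

open Finset

section MarkovChain

variable {α β : Type*}

theorem Fintype.sum_fin_snoc [Fintype α] {M : Type*} [AddCommMonoid M] {N : ℕ}
    (F : (Fin (N + 1) → α) → M) :
    ∑ x, F x = ∑ x : Fin N → α, ∑ a, F (Fin.snoc x a) := by
  rw [← (Fin.snocEquiv fun _ => α).sum_comp, Fintype.sum_prod_type, sum_comm]
  rfl

/-- The policy `p i` may depend on the step, so that one factor can be replaced by a policy
derivative. -/
def chainWeight {N : ℕ} (ν : α → ℝ) (p : Fin (N + 1) → α → β → ℝ) (Q : α → β → α → ℝ)
    (x : Fin (N + 1) → α) (b : Fin (N + 1) → β) : ℝ :=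
  ν (x 0) * (∏ i, p i (x i) (b i)) * ∏ i : Fin N, Q (x i.castSucc) (b i.castSucc) (x i.succ)

theorem chainWeight_snoc {N : ℕ} (ν : α → ℝ) (p : Fin (N + 2) → α → β → ℝ)
    (Q : α → β → α → ℝ) (x : Fin (N + 1) → α) (b : Fin (N + 1) → β) (xl : α) (bl : β) :
    chainWeight ν p Q (Fin.snoc x xl) (Fin.snoc b bl) =
      chainWeight ν (fun i => p i.castSucc) Q x b *
        (Q (x (Fin.last N)) (b (Fin.last N)) xl * p (Fin.last (N + 1)) xl bl) := by
  have h0 : (Fin.snoc x xl : Fin (N + 2) → α) 0 = x 0 := Fin.snoc_castSucc (i := 0) ..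
  simp only [chainWeight, Fin.prod_univ_castSucc (n := N + 1), Fin.prod_univ_castSucc (n := N),
    Fin.snoc_castSucc, Fin.snoc_last, Fin.succ_castSucc, Fin.succ_last, h0]
  ring

theorem mul_chainWeight_update {N : ℕ} (ν : α → ℝ) (p : Fin (N + 1) → α → β → ℝ)
    (Q : α → β → α → ℝ) (k : Fin (N + 1)) (q : α → β → ℝ) (x : Fin (N + 1) → α)
    (b : Fin (N + 1) → β) :
    p k (x k) (b k) * chainWeight ν (Function.update p k q) Q x b =
      q (x k) (b k) * chainWeight ν p Q x b := by
  have hrest : ∏ i ∈ univ.erase k, Function.update p k q i (x i) (b i) =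
      ∏ i ∈ univ.erase k, p i (x i) (b i) :=
    prod_congr rfl fun i hi => by rw [Function.update_of_ne (ne_of_mem_erase hi)]
  simp only [chainWeight, ← mul_prod_erase univ _ (mem_univ k), Function.update_self, hrest]
  ring

theorem sum_chainWeight_snoc_mul [Fintype α] [Fintype β] (ν : α → ℝ) (Q : α → β → α → ℝ)
    {N : ℕ} (p : Fin (N + 2) → α → β → ℝ) (j : Fin (N + 1)) (g : α → β → ℝ) :
    ∑ x, ∑ b, chainWeight ν p Q x b * g (x j.castSucc) (b j.castSucc) =
      ∑ x, ∑ b, chainWeight ν (fun i => p i.castSucc) Q x b * g (x j) (b j) *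
        ∑ xl, Q (x (Fin.last N)) (b (Fin.last N)) xl * ∑ bl, p (Fin.last (N + 1)) xl bl := by
  simp only [Fintype.sum_fin_snoc (N := N + 1), chainWeight_snoc, Fin.snoc_castSucc, mul_sum]
  refine sum_congr rfl fun x _ => sum_comm.trans (sum_congr rfl fun b _ => ?_)
  refine sum_congr rfl fun xl _ => sum_congr rfl fun bl _ => ?_
  ring

/-- Summing out the steps after `k`, each of which contributes a factor `1`, leaves the factor
`∑ b, p k (x k) b = 0`. -/
theorem sum_chainWeight_mul_eq_zero [Fintype α] [Fintype β] (ν : α → ℝ) (Q : α → β → α → ℝ)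
    (hQ : ∀ a b, ∑ a', Q a b a' = 1) (g : α → β → ℝ) :
    ∀ {N : ℕ} (p : Fin (N + 1) → α → β → ℝ) {j k : Fin (N + 1)}, j < k →
      (∀ a, ∑ b, p k a b = 0) → (∀ i, k < i → ∀ a, ∑ b, p i a b = 1) →
      ∑ x, ∑ b, chainWeight ν p Q x b * g (x j) (b j) = 0
  | 0, _, j, k, hjk, _, _ => absurd hjk (by omega)
  | N + 1, p, j, k, hjk, hk, hp => by
    obtain ⟨j, rfl⟩ : ∃ j' : Fin (N + 1), j'.castSucc = j :=
      Fin.exists_castSucc_eq.mpr (hjk.trans_le (Fin.le_last k)).ne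
    rw [sum_chainWeight_snoc_mul]
    induction k using Fin.lastCases with
    | last => simp [hk]
    | cast k =>
      have hlast : ∀ a, ∑ b, p (Fin.last (N + 1)) a b = 1 := hp _ (Fin.castSucc_lt_last k)
      simp only [hlast, mul_one, hQ]
      exact sum_chainWeight_mul_eq_zero ν Q hQ g _ (Fin.castSucc_lt_castSucc_iff.mp hjk) hk
        fun i hi => hp _ (Fin.castSucc_lt_castSucc_iff.mpr hi)

end MarkovChain

theorem hasFDerivAt_prod_of_pos {ι E : Type*} [Fintype ι] [NormedAddCommGroup E]
    [NormedSpace ℝ E] {f : ι → E → ℝ} {x : E} (hpos : ∀ i y, 0 < f i y)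
    (hf : ∀ i, DifferentiableAt ℝ (f i) x) :
    HasFDerivAt (fun y => ∏ i, f i y)
      ((∏ i, f i x) • fderiv ℝ (fun y => ∑ i, Real.log (f i y)) x) x := by
  have hexp : ∀ y, ∏ i, f i y = Real.exp (∑ i, Real.log (f i y)) := fun y => by
    rw [Real.exp_sum]
    exact prod_congr rfl fun i _ => (Real.exp_log (hpos i y)).symm
  have hlog : DifferentiableAt ℝ (fun y => ∑ i, Real.log (f i y)) x :=
    DifferentiableAt.fun_sum fun i _ => (hf i).log (hpos i x).ne'
  simpa only [hexp] using hlog.hasFDerivAt.exp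

section Trajectories

noncomputable def logLik (πF : (Fin n → ℝ) → SL → SF → AF → ℝ) (τ : Traj SL AL SF AF T H)
    (φ : Fin n → ℝ) : ℝ :=
  ∑ k : Fin (H + 1), Real.log (πF φ τ.z (τ.x k) (τ.b k))

def rewardToGo (γ : ℝ) (RF : SL → SF → AF → ℝ) (τ : Traj SL AL SF AF T H) (k : Fin (H + 1)) :
    ℝ :=
  ∑ j ∈ Ici k, γ ^ (j : ℕ) * RF τ.z (τ.x j) (τ.b j)

noncomputable def weightedLogLik (γ : ℝ) (RF : SL → SF → AF → ℝ)
    (πF : (Fin n → ℝ) → SL → SF → AF → ℝ) (τ : Traj SL AL SF AF T H) (φ : Fin n → ℝ) : ℝ :=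
  ∑ k : Fin (H + 1), Real.log (πF φ τ.z (τ.x k) (τ.b k)) * rewardToGo γ RF τ k

def followerReturn (γ : ℝ) (RF : SL → SF → AF → ℝ) (τ : Traj SL AL SF AF T H) : ℝ :=
  ∑ k : Fin (H + 1), γ ^ (k : ℕ) * RF τ.z (τ.x k) (τ.b k)

def leaderWeight (μL : SL → ℝ) (PL : SL → AL → SL → ℝ) (πL : (Fin m → ℝ) → SL → AL → ℝ)
    (θ : Fin m → ℝ) (s : Fin (T + 2) → SL) (a : Fin (T + 1) → AL) : ℝ :=
  μL (s 0) * ∏ t : Fin (T + 1), πL θ (s t.castSucc) (a t) * PL (s t.castSucc) (a t) (s t.succ)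

theorem Traj.sum_eq {M : Type*} [AddCommMonoid M] (F : Traj SL AL SF AF T H → M) :
    ∑ τ, F τ = ∑ s, ∑ a, ∑ x, ∑ b, F ⟨s, a, x, b⟩ := by
  let e : ((Fin (T + 2) → SL) × (Fin (T + 1) → AL) × (Fin (H + 1) → SF) ×
      (Fin (H + 1) → AF)) ≃ Traj SL AL SF AF T H :=
    ⟨fun p => ⟨p.1, p.2.1, p.2.2.1, p.2.2.2⟩, fun τ => ⟨τ.s, τ.a, τ.x, τ.b⟩,
      fun _ => rfl, fun _ => rfl⟩
  rw [← e.sum_comp]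
  simp only [Fintype.sum_prod_type]
  rfl

variable {γ : ℝ} {μL : SL → ℝ} {PL : SL → AL → SL → ℝ} {μF : SL → SF → ℝ}
  {PF : SL → SF → AF → SF → ℝ} {RF : SL → SF → AF → ℝ}
  {πL : (Fin m → ℝ) → SL → AL → ℝ} {πF : (Fin n → ℝ) → SL → SF → AF → ℝ} {θ : Fin m → ℝ}

theorem trajProb_eq_leaderWeight_mul_chainWeight (φ : Fin n → ℝ) (τ : Traj SL AL SF AF T H) :
    trajProb μL PL μF PF πL πF θ φ τ =
      leaderWeight μL PL πL θ τ.s τ.a *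
        chainWeight (μF τ.z) (fun _ => πF φ τ.z) (PF τ.z) τ.x τ.b := by
  unfold trajProb leaderWeight chainWeight
  ring

theorem followerReturn_sub_rewardToGo (τ : Traj SL AL SF AF T H) (k : Fin (H + 1)) :
    followerReturn γ RF τ - rewardToGo γ RF τ k =
      ∑ j ∈ Iio k, γ ^ (j : ℕ) * RF τ.z (τ.x j) (τ.b j) := by
  have hcompl : (Ici k)ᶜ = Iio k := by ext; simp
  rw [followerReturn, rewardToGo, ← sum_compl_add_sum (Ici k), hcompl, add_sub_cancel_right]

theorem sum_trajProb_mul_score_mul_eq_zero (hπF0 : ∀ φ z x b, 0 < πF φ z x b)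
    (hπF1 : ∀ φ z x, ∑ b : AF, πF φ z x b = 1) (hPF1 : ∀ z x b, ∑ x' : SF, PF z x b x' = 1)
    (φ : Fin n → ℝ) (d : SL → SF → AF → ℝ) (hd : ∀ z x, ∑ b, d z x b = 0) {j k : Fin (H + 1)}
    (hjk : j < k) (g : SL → SF → AF → ℝ) :
    ∑ τ : Traj SL AL SF AF T H, trajProb μL PL μF PF πL πF θ φ τ *
      ((πF φ τ.z (τ.x k) (τ.b k))⁻¹ * d τ.z (τ.x k) (τ.b k)) * g τ.z (τ.x j) (τ.b j) = 0 := by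
  have hterm : ∀ τ : Traj SL AL SF AF T H, trajProb μL PL μF PF πL πF θ φ τ *
      ((πF φ τ.z (τ.x k) (τ.b k))⁻¹ * d τ.z (τ.x k) (τ.b k)) =
      leaderWeight μL PL πL θ τ.s τ.a * chainWeight (μF τ.z)
        (Function.update (fun _ => πF φ τ.z) k (d τ.z)) (PF τ.z) τ.x τ.b := by
    intro τ
    have hupdate := mul_chainWeight_update (μF τ.z) (fun _ => πF φ τ.z) (PF τ.z) k (d τ.z) τ.x τ.b
    rw [trajProb_eq_leaderWeight_mul_chainWeight,
      (eq_inv_mul_iff_mul_eq₀ (hπF0 φ τ.z (τ.x k) (τ.b k)).ne').mpr hupdate]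
    ring
  simp only [hterm]
  rw [Traj.sum_eq]
  simp only [Traj.z, mul_assoc, ← mul_sum]
  refine sum_eq_zero fun s _ => sum_eq_zero fun a _ => mul_eq_zero_of_right _ ?_
  refine sum_chainWeight_mul_eq_zero _ _ (hPF1 _) (g _) _ hjk (by simpa using hd _) ?_
  intro i hi x
  simpa [Function.update_of_ne hi.ne'] using hπF1 φ _ x

theorem sum_fderiv_policy_eq_zero (hπF1 : ∀ φ z x, ∑ b : AF, πF φ z x b = 1)
    (hπFC : ∀ z x b, ContDiff ℝ 2 fun φ : Fin n → ℝ => πF φ z x b) (φ v : Fin n → ℝ) (z : SL)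
    (x : SF) : ∑ b, fderiv ℝ (fun φ => πF φ z x b) φ v = 0 := by
  have hsum := fderiv_fun_sum (u := univ) (x := φ)
    fun b _ => ((hπFC z x b).differentiable two_ne_zero).differentiableAt
  simp only [hπF1] at hsum
  simpa using (DFunLike.congr_fun hsum v).symm

theorem fderiv_logLik_apply (hπF0 : ∀ φ z x b, 0 < πF φ z x b)
    (hπFC : ∀ z x b, ContDiff ℝ 2 fun φ : Fin n → ℝ => πF φ z x b) (τ : Traj SL AL SF AF T H)
    (φ v : Fin n → ℝ) :
    fderiv ℝ (logLik πF τ) φ v = ∑ k : Fin (H + 1),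
      (πF φ τ.z (τ.x k) (τ.b k))⁻¹ * fderiv ℝ (fun φ => πF φ τ.z (τ.x k) (τ.b k)) φ v := by
  have hlog : HasFDerivAt (logLik πF τ) (∑ k : Fin (H + 1), (πF φ τ.z (τ.x k) (τ.b k))⁻¹ •
      fderiv ℝ (fun φ => πF φ τ.z (τ.x k) (τ.b k)) φ) φ :=
    HasFDerivAt.fun_sum fun k _ =>
      ((hπFC _ _ _).differentiable two_ne_zero φ).hasFDerivAt.log (hπF0 _ _ _ _).ne'
  simp [hlog.fderiv]

theorem fderiv_weightedLogLik_apply (hπF0 : ∀ φ z x b, 0 < πF φ z x b)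
    (hπFC : ∀ z x b, ContDiff ℝ 2 fun φ : Fin n → ℝ => πF φ z x b) (τ : Traj SL AL SF AF T H)
    (φ v : Fin n → ℝ) :
    fderiv ℝ (weightedLogLik γ RF πF τ) φ v = ∑ k : Fin (H + 1),
      (πF φ τ.z (τ.x k) (τ.b k))⁻¹ * fderiv ℝ (fun φ => πF φ τ.z (τ.x k) (τ.b k)) φ v *
        rewardToGo γ RF τ k := by
  have hlog : HasFDerivAt (weightedLogLik γ RF πF τ) (∑ k : Fin (H + 1), rewardToGo γ RF τ k •
      (πF φ τ.z (τ.x k) (τ.b k))⁻¹ • fderiv ℝ (fun φ => πF φ τ.z (τ.x k) (τ.b k)) φ) φ :=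
    HasFDerivAt.fun_sum fun k _ => (((hπFC _ _ _).differentiable two_ne_zero φ).hasFDerivAt.log
      (hπF0 _ _ _ _).ne').mul_const _
  simp [hlog.fderiv, mul_comm]

theorem contDiff_weightedLogLik (hπF0 : ∀ φ z x b, 0 < πF φ z x b)
    (hπFC : ∀ z x b, ContDiff ℝ 2 fun φ : Fin n → ℝ => πF φ z x b) (τ : Traj SL AL SF AF T H) :
    ContDiff ℝ 2 (weightedLogLik γ RF πF τ) :=
  ContDiff.sum fun _ _ =>
    ((hπFC _ _ _).log fun φ => (hπF0 φ _ _ _).ne').mul contDiff_const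

theorem hasFDerivAt_trajProb_s3 (hπF0 : ∀ φ z x b, 0 < πF φ z x b)
    (hπFC : ∀ z x b, ContDiff ℝ 2 fun φ : Fin n → ℝ => πF φ z x b) (φ : Fin n → ℝ)
    (τ : Traj SL AL SF AF T H) :
    HasFDerivAt (fun φ => trajProb μL PL μF PF πL πF θ φ τ)
      (trajProb μL PL μF PF πL πF θ φ τ • fderiv ℝ (logLik πF τ) φ) φ := by
  have hprod := hasFDerivAt_prod_of_pos (x := φ) (fun k ψ => hπF0 ψ τ.z (τ.x k) (τ.b k))
    fun k => ((hπFC τ.z (τ.x k) (τ.b k)).differentiable two_ne_zero).differentiableAt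
  refine ((hprod.const_mul (μL (τ.s 0) * (∏ t : Fin (T + 1),
      πL θ (τ.s t.castSucc) (τ.a t) * PL (τ.s t.castSucc) (τ.a t) (τ.s t.succ)) *
      μF τ.z (τ.x 0))).mul_const
    (∏ k : Fin H, PF τ.z (τ.x k.castSucc) (τ.b k.castSucc) (τ.x k.succ))).congr_fderiv ?_
  rw [smul_smul, smul_smul, trajProb]
  congr 1
  ring

theorem fderiv_sum_trajProb_mul_apply (hπF0 : ∀ φ z x b, 0 < πF φ z x b)
    (hπFC : ∀ z x b, ContDiff ℝ 2 fun φ : Fin n → ℝ => πF φ z x b) (φ v : Fin n → ℝ)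
    (F : Traj SL AL SF AF T H → (Fin n → ℝ) → ℝ) (hF : ∀ τ, DifferentiableAt ℝ (F τ) φ) :
    fderiv ℝ (fun φ => ∑ τ, trajProb μL PL μF PF πL πF θ φ τ * F τ φ) φ v =
      ∑ τ, trajProb μL PL μF PF πL πF θ φ τ * fderiv ℝ (F τ) φ v +
        ∑ τ, trajProb μL PL μF PF πL πF θ φ τ * (fderiv ℝ (logLik πF τ) φ v * F τ φ) := by
  have hsum : HasFDerivAt (fun φ => ∑ τ, trajProb μL PL μF PF πL πF θ φ τ * F τ φ)
      (∑ τ, (trajProb μL PL μF PF πL πF θ φ τ • fderiv ℝ (F τ) φ +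
        F τ φ • trajProb μL PL μF PF πL πF θ φ τ • fderiv ℝ (logLik πF τ) φ)) φ :=
    HasFDerivAt.fun_sum fun τ _ => (hasFDerivAt_trajProb_s3 hπF0 hπFC φ τ).mul (hF τ).hasFDerivAt
  rw [hsum.fderiv]
  simp only [sum_add_distrib, add_apply, _root_.sum_apply, smul_apply, smul_eq_mul, add_right_inj]
  exact sum_congr rfl fun τ _ => by ring

theorem fderiv_JF_apply (hπF0 : ∀ φ z x b, 0 < πF φ z x b)
    (hπFC : ∀ z x b, ContDiff ℝ 2 fun φ : Fin n → ℝ => πF φ z x b) (φ v : Fin n → ℝ) :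
    fderiv ℝ (JF γ μL PL μF PF RF πL πF T H θ) φ v =
      ∑ τ : Traj SL AL SF AF T H, trajProb μL PL μF PF πL πF θ φ τ *
        fderiv ℝ (logLik πF τ) φ v * followerReturn γ RF τ := by
  have hsum : HasFDerivAt (JF γ μL PL μF PF RF πL πF T H θ)
      (∑ τ : Traj SL AL SF AF T H, followerReturn γ RF τ •
        trajProb μL PL μF PF πL πF θ φ τ • fderiv ℝ (logLik πF τ) φ) φ :=
    HasFDerivAt.fun_sum fun τ _ => (hasFDerivAt_trajProb_s3 hπF0 hπFC φ τ).mul_const _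
  rw [hsum.fderiv]
  simp only [_root_.sum_apply, smul_apply, smul_eq_mul]
  exact sum_congr rfl fun τ _ => by ring

/-- The score of step `k` is uncorrelated with the rewards earned before step `k`, so the return
can be replaced by the reward-to-go `W_k`. -/
theorem sum_trajProb_mul_fderiv_logLik_mul_followerReturn (hπF0 : ∀ φ z x b, 0 < πF φ z x b)
    (hπF1 : ∀ φ z x, ∑ b : AF, πF φ z x b = 1)
    (hπFC : ∀ z x b, ContDiff ℝ 2 fun φ : Fin n → ℝ => πF φ z x b)
    (hPF1 : ∀ z x b, ∑ x' : SF, PF z x b x' = 1) (φ v : Fin n → ℝ) :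
    ∑ τ : Traj SL AL SF AF T H, trajProb μL PL μF PF πL πF θ φ τ *
        fderiv ℝ (logLik πF τ) φ v * followerReturn γ RF τ =
      ∑ τ : Traj SL AL SF AF T H, trajProb μL PL μF PF πL πF θ φ τ *
        fderiv ℝ (weightedLogLik γ RF πF τ) φ v := by
  set score := fun z x b => fderiv ℝ (fun φ => πF φ z x b) φ v
  have hterm : ∀ τ : Traj SL AL SF AF T H, trajProb μL PL μF PF πL πF θ φ τ *
      fderiv ℝ (logLik πF τ) φ v * followerReturn γ RF τ - trajProb μL PL μF PF πL πF θ φ τ *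
        fderiv ℝ (weightedLogLik γ RF πF τ) φ v =
      ∑ k, ∑ j ∈ Iio k, trajProb μL PL μF PF πL πF θ φ τ *
        ((πF φ τ.z (τ.x k) (τ.b k))⁻¹ * score τ.z (τ.x k) (τ.b k)) *
          (γ ^ (j : ℕ) * RF τ.z (τ.x j) (τ.b j)) := by
    intro τ
    calc _ = ∑ k, trajProb μL PL μF PF πL πF θ φ τ *
          ((πF φ τ.z (τ.x k) (τ.b k))⁻¹ * score τ.z (τ.x k) (τ.b k)) *
            (followerReturn γ RF τ - rewardToGo γ RF τ k) := by
          rw [fderiv_logLik_apply hπF0 hπFC, fderiv_weightedLogLik_apply hπF0 hπFC, mul_sum,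
            sum_mul, mul_sum, ← sum_sub_distrib]
          exact sum_congr rfl fun k _ => by ring
      _ = _ := by simp only [followerReturn_sub_rewardToGo, mul_sum]
  rw [← sub_eq_zero, ← sum_sub_distrib, sum_congr rfl fun τ _ => hterm τ, sum_comm]
  refine sum_eq_zero fun k _ => ?_
  rw [sum_comm]
  exact sum_eq_zero fun j hj => sum_trajProb_mul_score_mul_eq_zero hπF0 hπF1 hPF1 φ score
    (sum_fderiv_policy_eq_zero hπF1 hπFC φ v) (mem_Iio.mp hj) fun z x b => γ ^ (j : ℕ) * RF z x b

end Trajectories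

theorem follower_hessian_decomposition_general
    {SL AL SF AF : Type} [Fintype SL] [Fintype AL] [Fintype SF] [Fintype AF]
    {m n T H : ℕ} (γ : ℝ)
    (μL : SL → ℝ)
    (PL : SL → AL → SL → ℝ)
    (μF : SL → SF → ℝ)
    (PF : SL → SF → AF → SF → ℝ)
    (hPF1 : ∀ z x b, ∑ x' : SF, PF z x b x' = 1)
    (RF : SL → SF → AF → ℝ)
    (πL : (Fin m → ℝ) → SL → AL → ℝ)
    (πF : (Fin n → ℝ) → SL → SF → AF → ℝ) (hπF0 : ∀ φ z x b, 0 < πF φ z x b)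
    (hπF1 : ∀ φ z x, ∑ b : AF, πF φ z x b = 1)
    (hπFC : ∀ z x b, ContDiff ℝ 2 fun φ : Fin n → ℝ => πF φ z x b) :
    ∀ (θ : Fin m → ℝ) (φ : Fin n → ℝ) (i j : Fin n),
      fderiv ℝ (fun φ₁ : Fin n → ℝ =>
          fderiv ℝ (fun φ₂ : Fin n → ℝ => JF γ μL PL μF PF RF πL πF T H θ φ₂) φ₁
            (Pi.single j 1)) φ (Pi.single i 1)
        =
      (∑ τ : Traj SL AL SF AF T H,
        trajProb μL PL μF PF πL πF θ φ τ *
          fderiv ℝ (fun φ₁ : Fin n → ℝ =>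
            fderiv ℝ (fun φ₂ : Fin n → ℝ =>
              ∑ k : Fin (H + 1), Real.log (πF φ₂ τ.z (τ.x k) (τ.b k)) *
                ∑ j' ∈ Finset.Ici k, γ ^ (j' : ℕ) * RF τ.z (τ.x j') (τ.b j')) φ₁
              (Pi.single j 1)) φ (Pi.single i 1))
      +
      (∑ τ : Traj SL AL SF AF T H,
        trajProb μL PL μF PF πL πF θ φ τ *
          (fderiv ℝ (fun φ₂ : Fin n → ℝ =>
              ∑ k : Fin (H + 1), Real.log (πF φ₂ τ.z (τ.x k) (τ.b k))) φ
            (Pi.single i 1) *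
           fderiv ℝ (fun φ₂ : Fin n → ℝ =>
              ∑ k : Fin (H + 1), Real.log (πF φ₂ τ.z (τ.x k) (τ.b k)) *
                ∑ j' ∈ Finset.Ici k, γ ^ (j' : ℕ) * RF τ.z (τ.x j') (τ.b j')) φ
            (Pi.single j 1))) := by
  intro θ φ i j
  have hgrad : (fun φ₁ => fderiv ℝ (fun φ₂ => JF γ μL PL μF PF RF πL πF T H θ φ₂) φ₁
      (Pi.single j 1)) = fun φ₁ => ∑ τ : Traj SL AL SF AF T H,
        trajProb μL PL μF PF πL πF θ φ₁ τ *
          fderiv ℝ (weightedLogLik γ RF πF τ) φ₁ (Pi.single j 1) :=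
    funext fun φ₁ => (fderiv_JF_apply hπF0 hπFC φ₁ _).trans
      (sum_trajProb_mul_fderiv_logLik_mul_followerReturn hπF0 hπF1 hπFC hPF1 φ₁ _)
  rw [hgrad]
  exact fderiv_sum_trajProb_mul_apply hπF0 hπFC φ _ _ fun τ =>
    (((contDiff_weightedLogLik hπF0 hπFC τ).fderiv_right one_add_one_eq_two.le).clm_apply
      contDiff_const).differentiable one_ne_zero φ

/-- Hessian decomposition of the follower objective in `φ`:
with `W_k(τ) = ∑_{j=k}^{H} γ^j R_F(s_T, x_j, b_j)` and
`ℓ_k(φ, τ) = log π_F(φ)(b_k | x_k; s_T)`, the `(i, j)` entry of `∇²_φ J_F(θ, φ)`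
decomposes as stated (assuming the follower policy is three times continuously
differentiable in `φ` so that the Hessian exists). -/
theorem follower_hessian_decomposition
    {SL AL SF AF : Type} [Fintype SL] [Fintype AL] [Fintype SF] [Fintype AF]
    [Nonempty SL] [Nonempty AL] [Nonempty SF] [Nonempty AF]
    {m n T H : ℕ} (γ : ℝ) (hγ0 : 0 < γ) (hγ1 : γ ≤ 1)
    (μL : SL → ℝ) (hμL0 : ∀ s, 0 ≤ μL s) (hμL1 : ∑ s : SL, μL s = 1)
    (PL : SL → AL → SL → ℝ) (hPL0 : ∀ s a s', 0 ≤ PL s a s')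
    (hPL1 : ∀ s a, ∑ s' : SL, PL s a s' = 1)
    (μF : SL → SF → ℝ) (hμF0 : ∀ z x, 0 ≤ μF z x) (hμF1 : ∀ z, ∑ x : SF, μF z x = 1)
    (PF : SL → SF → AF → SF → ℝ) (hPF0 : ∀ z x b x', 0 ≤ PF z x b x')
    (hPF1 : ∀ z x b, ∑ x' : SF, PF z x b x' = 1)
    (RL : SL → AL → ℝ) (RF : SL → SF → AF → ℝ)
    (πL : (Fin m → ℝ) → SL → AL → ℝ) (hπL0 : ∀ θ s a, 0 < πL θ s a)
    (hπL1 : ∀ θ s, ∑ a : AL, πL θ s a = 1)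
    (hπLC : ∀ s a, ContDiff ℝ 2 fun θ : Fin m → ℝ => πL θ s a)
    (πF : (Fin n → ℝ) → SL → SF → AF → ℝ) (hπF0 : ∀ φ z x b, 0 < πF φ z x b)
    (hπF1 : ∀ φ z x, ∑ b : AF, πF φ z x b = 1)
    (hπFC : ∀ z x b, ContDiff ℝ 2 fun φ : Fin n → ℝ => πF φ z x b)
    (hπFC3 : ∀ z x b, ContDiff ℝ 3 fun φ : Fin n → ℝ => πF φ z x b) :
    ∀ (θ : Fin m → ℝ) (φ : Fin n → ℝ) (i j : Fin n),
      fderiv ℝ (fun φ₁ : Fin n → ℝ =>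
          fderiv ℝ (fun φ₂ : Fin n → ℝ => JF γ μL PL μF PF RF πL πF T H θ φ₂) φ₁
            (Pi.single j 1)) φ (Pi.single i 1)
        =
      (∑ τ : Traj SL AL SF AF T H,
        trajProb μL PL μF PF πL πF θ φ τ *
          fderiv ℝ (fun φ₁ : Fin n → ℝ =>
            fderiv ℝ (fun φ₂ : Fin n → ℝ =>
              ∑ k : Fin (H + 1), Real.log (πF φ₂ τ.z (τ.x k) (τ.b k)) *
                ∑ j' ∈ Finset.Ici k, γ ^ (j' : ℕ) * RF τ.z (τ.x j') (τ.b j')) φ₁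
              (Pi.single j 1)) φ (Pi.single i 1))
      +
      (∑ τ : Traj SL AL SF AF T H,
        trajProb μL PL μF PF πL πF θ φ τ *
          (fderiv ℝ (fun φ₂ : Fin n → ℝ =>
              ∑ k : Fin (H + 1), Real.log (πF φ₂ τ.z (τ.x k) (τ.b k))) φ
            (Pi.single i 1) *
           fderiv ℝ (fun φ₂ : Fin n → ℝ =>
              ∑ k : Fin (H + 1), Real.log (πF φ₂ τ.z (τ.x k) (τ.b k)) *
                ∑ j' ∈ Finset.Ici k, γ ^ (j' : ℕ) * RF τ.z (τ.x j') (τ.b j')) φ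
            (Pi.single j 1))) :=
  follower_hessian_decomposition_general γ μL PL μF PF hPF1 RF πL πF hπF0 hπF1 hπFC
end

section
/- Stackelberg leader gradient decomposition via implicit differentiation: let f, h : ℝ^m × ℝ^n → ℝ with f twice continuously differentiable and h continuously differentiable, and let g : ℝ^m → ℝ^n be differentiable at x₀ and satisfy ∇_y f(x, g(x)) = 0 for all x in a neighborhood of x₀, with H = ∇²_{yy} f(x₀, g(x₀)) invertible. Then the gradient of the composite map x ↦ h(x, g(x)) at x₀ equals ∇_x h(x₀, g(x₀)) − (∇²_{yx} f(x₀, g(x₀)))ᵀ · H^{−1} · ∇_y h(x₀, g(x₀)), where H is symmetric by equality of mixed partial derivatives. -/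
/-!
Differentiating the first-order condition `∂_y f (x, g x) = 0` along the graph of `g` gives
`∂_x ∂_y f + ∂²_yy f ∘ Dg = 0` at `x₀`. In coordinates, and after exchanging the mixed partials by
the symmetry of the second derivative of `f`, this reads `(Dg)ᵀ H = -Cᵀ`, so `(Dg)ᵀ = -Cᵀ H⁻¹`.
Substituting into the chain rule `∇(x ↦ h (x, g x)) = ∇_x h + (Dg)ᵀ ∇_y h` gives the formula.
-/

open Topology Matrix ContinuousLinearMap

section PartialDerivatives

variable {𝕜 E Y Z : Type*} [NontriviallyNormedField 𝕜]
  [NormedAddCommGroup E] [NormedSpace 𝕜 E] [NormedAddCommGroup Y] [NormedSpace 𝕜 Y]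
  [NormedAddCommGroup Z] [NormedSpace 𝕜 Z]

theorem fderiv_curry_left {f : E → Y → Z} {x : E} {y : Y}
    (hf : DifferentiableAt 𝕜 (fun p : E × Y => f p.1 p.2) (x, y)) :
    fderiv 𝕜 (fun x' => f x' y) x =
      (fderiv 𝕜 (fun p : E × Y => f p.1 p.2) (x, y)).comp (inl 𝕜 E Y) :=
  (hf.hasFDerivAt.comp x (hasFDerivAt_prodMk_left (𝕜 := 𝕜) x y) :).fderiv

theorem fderiv_curry_right {f : E → Y → Z} {x : E} {y : Y}
    (hf : DifferentiableAt 𝕜 (fun p : E × Y => f p.1 p.2) (x, y)) :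
    fderiv 𝕜 (fun y' => f x y') y =
      (fderiv 𝕜 (fun p : E × Y => f p.1 p.2) (x, y)).comp (inr 𝕜 E Y) :=
  (hf.hasFDerivAt.comp y (hasFDerivAt_prodMk_right x y)).fderiv

theorem fderiv_apply_graph {f : E → Y → Z} {g : E → Y} {x : E}
    (hf : DifferentiableAt 𝕜 (fun p : E × Y => f p.1 p.2) (x, g x))
    (hg : DifferentiableAt 𝕜 g x) :
    fderiv 𝕜 (fun x' => f x' (g x')) x =
      fderiv 𝕜 (fun x' => f x' (g x)) x +
        (fderiv 𝕜 (fun y => f x y) (g x)).comp (fderiv 𝕜 g x) := by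
  have hgraph : HasFDerivAt (fun x' => f x' (g x'))
      ((fderiv 𝕜 (fun p : E × Y => f p.1 p.2) (x, g x)).comp
        ((ContinuousLinearMap.id 𝕜 E).prod (fderiv 𝕜 g x))) x :=
    (hf.hasFDerivAt.comp x ((hasFDerivAt_id x).prodMk hg.hasFDerivAt) :)
  rw [hgraph.fderiv, fderiv_curry_left hf, fderiv_curry_right hf]
  ext v
  simp [← map_add]

theorem fderiv_partial_add_comp_eq_zero {f : E → Y → Z} {g : E → Y} {x₀ : E}
    (hf : DifferentiableAt 𝕜 (fun p : E × Y => fderiv 𝕜 (fun y => f p.1 y) p.2) (x₀, g x₀))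
    (hg : DifferentiableAt 𝕜 g x₀) (hcrit : ∀ᶠ x in 𝓝 x₀, fderiv 𝕜 (fun y => f x y) (g x) = 0) :
    fderiv 𝕜 (fun x => fderiv 𝕜 (fun y => f x y) (g x₀)) x₀ +
      (fderiv 𝕜 (fun y => fderiv 𝕜 (fun y' => f x₀ y') y) (g x₀)).comp (fderiv 𝕜 g x₀) = 0 := by
  rw [← fderiv_apply_graph hf hg, Filter.EventuallyEq.fderiv_eq (f := fun _ => 0) hcrit,
    fderiv_const_apply]

theorem fderiv_clm_apply_const_apply {L : E → Y →L[𝕜] Z} {x : E}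
    (hL : DifferentiableAt 𝕜 L x) (u : Y) (v : E) :
    fderiv 𝕜 (fun x' => L x' u) x v = fderiv 𝕜 L x v u := by
  simp [fderiv_clm_apply hL (differentiableAt_const u)]

theorem fderiv_fderiv_curry_right_apply {f : E → Y → Z} {x : E} {y : Y}
    (hf : Differentiable 𝕜 (fun p : E × Y => f p.1 p.2))
    (hf' : DifferentiableAt 𝕜 (fderiv 𝕜 fun p : E × Y => f p.1 p.2) (x, y)) (v : E) (w : Y) :
    fderiv 𝕜 (fun x' => fderiv 𝕜 (fun y' => f x' y') y) x v w =
      fderiv 𝕜 (fderiv 𝕜 fun p : E × Y => f p.1 p.2) (x, y) (v, 0) (0, w) := by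
  have hpartial : (fun x' => fderiv 𝕜 (fun y' => f x' y') y) =
      fun x' => (fderiv 𝕜 (fun p : E × Y => f p.1 p.2) (x', y)).comp (inr 𝕜 E Y) :=
    funext fun x' => fderiv_curry_right (hf _)
  have hslice : HasFDerivAt (fun x' => fderiv 𝕜 (fun p : E × Y => f p.1 p.2) (x', y))
      ((fderiv 𝕜 (fderiv 𝕜 fun p : E × Y => f p.1 p.2) (x, y)).comp (inl 𝕜 E Y)) x :=
    hf'.hasFDerivAt.comp x (hasFDerivAt_prodMk_left x y)
  rw [hpartial, (hslice.clm_comp (hasFDerivAt_const (inr 𝕜 E Y) x)).fderiv]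
  simp

theorem fderiv_fderiv_curry_left_apply {f : E → Y → Z} {x : E} {y : Y}
    (hf : Differentiable 𝕜 (fun p : E × Y => f p.1 p.2))
    (hf' : DifferentiableAt 𝕜 (fderiv 𝕜 fun p : E × Y => f p.1 p.2) (x, y)) (w : Y) (v : E) :
    fderiv 𝕜 (fun y' => fderiv 𝕜 (fun x' => f x' y') x) y w v =
      fderiv 𝕜 (fderiv 𝕜 fun p : E × Y => f p.1 p.2) (x, y) (0, w) (v, 0) := by
  have hpartial : (fun y' => fderiv 𝕜 (fun x' => f x' y') x) =
      fun y' => (fderiv 𝕜 (fun p : E × Y => f p.1 p.2) (x, y')).comp (inl 𝕜 E Y) :=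
    funext fun y' => fderiv_curry_left (hf _)
  have hslice : HasFDerivAt (fun y' => fderiv 𝕜 (fun p : E × Y => f p.1 p.2) (x, y'))
      ((fderiv 𝕜 (fderiv 𝕜 fun p : E × Y => f p.1 p.2) (x, y)).comp (inr 𝕜 E Y)) y :=
    hf'.hasFDerivAt.comp y (hasFDerivAt_prodMk_right x y)
  rw [hpartial, (hslice.clm_comp (hasFDerivAt_const (inl 𝕜 E Y) y)).fderiv]
  simp

theorem fderiv_fderiv_curry_comm [IsRCLikeNormedField 𝕜] {f : E → Y → Z}
    (hf : ContDiff 𝕜 2 fun p : E × Y => f p.1 p.2) (x : E) (y : Y) (v : E) (w : Y) :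
    fderiv 𝕜 (fun x' => fderiv 𝕜 (fun y' => f x' y') y) x v w =
      fderiv 𝕜 (fun y' => fderiv 𝕜 (fun x' => f x' y') x) y w v := by
  have hd : Differentiable 𝕜 fun p : E × Y => f p.1 p.2 := hf.differentiable two_ne_zero
  have hd' : DifferentiableAt 𝕜 (fderiv 𝕜 fun p : E × Y => f p.1 p.2) (x, y) :=
    (hf.fderiv_right le_rfl).differentiable one_ne_zero _
  rw [fderiv_fderiv_curry_right_apply hd hd', fderiv_fderiv_curry_left_apply hd hd',
    (hf.contDiffAt.isSymmSndFDerivAt (by simp)).eq]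

theorem ContDiff.fderiv_curry_left {m n : WithTop ℕ∞} {f : E → Y → Z}
    (hf : ContDiff 𝕜 m fun p : E × Y => f p.1 p.2) (hnm : n + 1 ≤ m) :
    ContDiff 𝕜 n fun p : E × Y => fderiv 𝕜 (fun x => f x p.2) p.1 :=
  ContDiff.fderiv (f := fun p x => f x p.2) (hf.comp (contDiff_snd.prodMk contDiff_fst.snd))
    contDiff_fst hnm

theorem ContDiff.fderiv_curry_right {m n : WithTop ℕ∞} {f : E → Y → Z}
    (hf : ContDiff 𝕜 m fun p : E × Y => f p.1 p.2) (hnm : n + 1 ≤ m) :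
    ContDiff 𝕜 n fun p : E × Y => fderiv 𝕜 (fun y => f p.1 y) p.2 :=
  ContDiff.fderiv (f := fun p y => f p.1 y) (hf.comp (contDiff_fst.fst.prodMk contDiff_snd))
    contDiff_snd hnm

end PartialDerivatives

theorem LinearMap.apply_eq_dotProduct {R ι : Type*} [CommSemiring R] [Fintype ι] [DecidableEq ι]
    (L : (ι → R) →ₗ[R] R) (v : ι → R) : L v = (fun i => L (Pi.single i 1)) ⬝ᵥ v := by
  conv_lhs => rw [← Finset.univ_sum_single v]
  refine (map_sum L _ _).trans (Finset.sum_congr rfl fun i _ => ?_)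
  rw [mul_comm, ← smul_eq_mul, ← map_smul, ← Pi.single_smul, smul_eq_mul, mul_one]

theorem LinearMap.apply_single_eq_transpose_mulVec {R ι κ : Type*} [CommSemiring R] [Fintype ι]
    [DecidableEq ι] [Fintype κ] [DecidableEq κ] (L : (ι → R) →ₗ[R] R) (A : (κ → R) →ₗ[R] ι → R) :
    (fun j => L (A (Pi.single j 1))) = (LinearMap.toMatrix' A)ᵀ *ᵥ fun i => L (Pi.single i 1) := by
  ext j
  rw [L.apply_eq_dotProduct, mulVec_transpose, vecMul, dotProduct, dotProduct]
  simp [LinearMap.toMatrix'_apply]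

theorem Matrix.mulVec_eq_neg_of_mul_eq_neg {R m n : Type*} [CommRing R] [Fintype n] [DecidableEq n]
    [Fintype m] {K D : Matrix m n R} {H : Matrix n n R} (hK : K * H = -D) (hH : IsUnit H)
    (b : n → R) : K *ᵥ b = -(D *ᵥ (H⁻¹ *ᵥ b)) := by
  rw [← mul_nonsing_inv_cancel_right H K ((isUnit_iff_isUnit_det H).mp hH), hK,
    ← mulVec_mulVec, neg_mulVec]

/-- Stackelberg leader gradient decomposition via implicit
differentiation: with `f` twice continuously differentiable, `h` continuously
differentiable, `g` differentiable at `x₀` satisfying `∇_y f(x, g(x)) = 0` near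
`x₀`, and `H = ∇²_{yy} f(x₀, g(x₀))` invertible, the gradient of `x ↦ h(x, g(x))`
at `x₀` equals `∇_x h(x₀, g(x₀)) - (∇²_{yx} f(x₀, g(x₀)))ᵀ · H⁻¹ · ∇_y h(x₀, g(x₀))`
(where `H` is symmetric by equality of mixed partial derivatives). -/
theorem stackelberg_leader_gradient_decomposition {m n : ℕ}
    (f h : (Fin m → ℝ) → (Fin n → ℝ) → ℝ) (g : (Fin m → ℝ) → (Fin n → ℝ))
    (x₀ : Fin m → ℝ)
    (hf : ContDiff ℝ 2 fun p : (Fin m → ℝ) × (Fin n → ℝ) => f p.1 p.2)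
    (hh : ContDiff ℝ 1 fun p : (Fin m → ℝ) × (Fin n → ℝ) => h p.1 p.2)
    (hg : DifferentiableAt ℝ g x₀)
    (hopt : ∀ᶠ x in nhds x₀, ∀ i : Fin n,
      fderiv ℝ (fun y : Fin n → ℝ => f x y) (g x) (Pi.single i 1) = 0)
    (Hmat : Matrix (Fin n) (Fin n) ℝ)
    (hH : Hmat = Matrix.of fun i j : Fin n =>
      fderiv ℝ (fun y : Fin n → ℝ =>
        fderiv ℝ (fun y' : Fin n → ℝ => f x₀ y') y (Pi.single j 1)) (g x₀)
        (Pi.single i 1))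
    (hHinv : IsUnit Hmat)
    (C : Matrix (Fin n) (Fin m) ℝ)
    (hC : C = Matrix.of fun (i : Fin n) (j : Fin m) =>
      fderiv ℝ (fun y : Fin n → ℝ =>
        fderiv ℝ (fun x : Fin m → ℝ => f x y) x₀ (Pi.single j 1)) (g x₀)
        (Pi.single i 1)) :
    (fun j : Fin m => fderiv ℝ (fun x : Fin m → ℝ => h x (g x)) x₀ (Pi.single j 1))
      =
    (fun j : Fin m => fderiv ℝ (fun x : Fin m → ℝ => h x (g x₀)) x₀ (Pi.single j 1))
      - Cᵀ *ᵥ (Hmat⁻¹ *ᵥ fun i : Fin n =>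
          fderiv ℝ (fun y : Fin n → ℝ => h x₀ y) (g x₀) (Pi.single i 1)) := by
  have hfy : Differentiable ℝ fun p : (Fin m → ℝ) × (Fin n → ℝ) =>
      fderiv ℝ (fun y => f p.1 y) p.2 :=
    (hf.fderiv_curry_right one_add_one_eq_two.le).differentiable one_ne_zero
  have hfyy : Differentiable ℝ fun y => fderiv ℝ (fun y' => f x₀ y') y :=
    hfy.comp (differentiable_const x₀ |>.prodMk differentiable_id)
  have hfxy : Differentiable ℝ fun y => fderiv ℝ (fun x => f x y) x₀ :=
    ((hf.fderiv_curry_left one_add_one_eq_two.le).differentiable one_ne_zero).comp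
      (differentiable_const x₀ |>.prodMk differentiable_id)
  set Dxy := fderiv ℝ (fun x => fderiv ℝ (fun y => f x y) (g x₀)) x₀
  set Dyy := fderiv ℝ (fun y => fderiv ℝ (fun y' => f x₀ y') y) (g x₀)
  have himplicit : Dyy.comp (fderiv ℝ g x₀) = -Dxy :=
    eq_neg_of_add_eq_zero_right <| fderiv_partial_add_comp_eq_zero (hfy _) hg <| hopt.mono
      fun x hx => coe_injective <| (Pi.basisFun ℝ _).ext fun i => by simpa using hx i
  have hHmat : Hmat = LinearMap.toMatrix₂' ℝ Dyy.toLinearMap₁₂ := by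
    ext i j
    rw [hH, of_apply, fderiv_clm_apply_const_apply (hfyy _)]
    rfl
  have hCt : Cᵀ = LinearMap.toMatrix₂' ℝ Dxy.toLinearMap₁₂ := by
    ext j i
    rw [transpose_apply, hC, of_apply, fderiv_clm_apply_const_apply (hfxy _),
      ← fderiv_fderiv_curry_comm hf]
    rfl
  have hJH : (LinearMap.toMatrix' (fderiv ℝ g x₀).toLinearMap)ᵀ * Hmat = -Cᵀ := by
    rw [hHmat, hCt, ← LinearMap.toMatrix₂'_comp, ← map_neg, ← map_neg, ← himplicit]
    rfl
  rw [fderiv_apply_graph (hh.differentiable one_ne_zero _) hg, sub_eq_add_neg,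
    ← mulVec_eq_neg_of_mul_eq_neg hJH hHinv]
  exact funext fun j => congrArg (_ + ·) <| congrFun (LinearMap.apply_single_eq_transpose_mulVec
    (fderiv ℝ (fun y => h x₀ y) (g x₀)).toLinearMap (fderiv ℝ g x₀).toLinearMap) j
end

section
/- Hessian of the Kullback–Leibler divergence equals the Fisher information matrix: let X be a finite nonempty set and p : ℝ^n × X → ℝ a parametrized family with p(φ,x) > 0 for all (φ,x), Σ_{x∈X} p(φ,x) = 1 for all φ, and φ ↦ p(φ,x) twice continuously differentiable for each x. Fix φ₀ ∈ ℝ^n and define K(φ) = Σ_{x∈X} p(φ,x)·log(p(φ,x)/p(φ₀,x)). Then K(φ₀) = 0, ∇K(φ₀) = 0, and ∇²K(φ₀) = Σ_{x∈X} p(φ₀,x)·∇_φ log p(φ₀,x)·(∇_φ log p(φ₀,x))ᵀ, the Fisher information matrix at φ₀. -/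
/-!
Differentiating under the finite sum, `∇K(φ) = ∑ₓ (log (p(φ,x) / p(φ₀,x)) + 1) ∇p(φ,x)`.
Since `∑ₓ p(φ,x) = 1` identically, both `∑ₓ ∇p(φ,x)` and `∑ₓ ∇²p(φ,x)` vanish: the first kills
`∇K(φ₀)`, the second leaves in `∇²K(φ₀)` only `∑ₓ ∇p ∇pᵀ / p = ∑ₓ p ∇log p ∇log pᵀ`.
-/

open Real

theorem Real.hasDerivAt_mul_log_div {t c : ℝ} (ht : t ≠ 0) (hc : c ≠ 0) :
    HasDerivAt (fun s => s * log (s / c)) (log (t / c) + 1) t := by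
  have h : HasDerivAt (fun s => s * log (s / c)) (1 * log (t / c) + t * (1 / c / (t / c))) t :=
    (hasDerivAt_id t).mul (((hasDerivAt_id t).div_const c).log (div_ne_zero ht hc))
  convert h using 1
  field_simp

theorem sum_fderiv_eq_zero_of_sum_eq_const {E F ι : Type*} [NormedAddCommGroup E]
    [NormedSpace ℝ E] [NormedAddCommGroup F] [NormedSpace ℝ F] [Fintype ι] {f : ι → E → F}
    {c : F} (hc : ∀ φ, ∑ i, f i φ = c) {φ : E} (hf : ∀ i, DifferentiableAt ℝ (f i) φ) :
    ∑ i, fderiv ℝ (f i) φ = 0 := by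
  rw [← fderiv_fun_sum fun i _ => hf i, funext hc, fderiv_const_apply]

noncomputable def klDiv {E X : Type*} [Fintype X] (p : E → X → ℝ) (φ₀ φ : E) : ℝ :=
  ∑ x, p φ x * log (p φ x / p φ₀ x)

noncomputable def fisherInfo {E X : Type*} [Fintype X] [NormedAddCommGroup E] [NormedSpace ℝ E]
    (p : E → X → ℝ) (φ₀ v w : E) : ℝ :=
  ∑ x, p φ₀ x * (fderiv ℝ (fun φ => log (p φ x)) φ₀ v * fderiv ℝ (fun φ => log (p φ x)) φ₀ w)

section

variable {E X : Type*} [Fintype X] {p : E → X → ℝ} {φ₀ φ : E}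

theorem klDiv_self : klDiv p φ₀ φ₀ = 0 :=
  Finset.sum_eq_zero fun x _ => by
    rcases eq_or_ne (p φ₀ x) 0 with h | h <;> simp [h]

variable [NormedAddCommGroup E] [NormedSpace ℝ E]

theorem hasFDerivAt_klDiv (hp : ∀ x, p φ x ≠ 0) (hp₀ : ∀ x, p φ₀ x ≠ 0)
    (hd : ∀ x, DifferentiableAt ℝ (p · x) φ) :
    HasFDerivAt (klDiv p φ₀) (∑ x, (log (p φ x / p φ₀ x) + 1) • fderiv ℝ (p · x) φ) φ :=
  HasFDerivAt.fun_sum fun x _ =>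
    (hasDerivAt_mul_log_div (hp x) (hp₀ x)).comp_hasFDerivAt (f := (p · x)) φ
      (hd x).hasFDerivAt

theorem fderiv_klDiv_self (hp₀ : ∀ x, p φ₀ x ≠ 0) (hp1 : ∀ φ, ∑ x, p φ x = 1)
    (hd : ∀ x, DifferentiableAt ℝ (p · x) φ₀) :
    fderiv ℝ (klDiv p φ₀) φ₀ = 0 := by
  rw [(hasFDerivAt_klDiv hp₀ hp₀ hd).fderiv]
  simpa [div_self (hp₀ _)] using sum_fderiv_eq_zero_of_sum_eq_const hp1 hd

theorem fderiv_fderiv_klDiv_self_apply (hp : ∀ φ x, p φ x ≠ 0) (hp1 : ∀ φ, ∑ x, p φ x = 1)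
    (hd : ∀ x, Differentiable ℝ (p · x)) {w : E}
    (hd2 : ∀ x, DifferentiableAt ℝ (fun φ => fderiv ℝ (p · x) φ w) φ₀) (v : E) :
    fderiv ℝ (fun φ => fderiv ℝ (klDiv p φ₀) φ w) φ₀ v = fisherInfo p φ₀ v w := by
  have hK : (fun φ => fderiv ℝ (klDiv p φ₀) φ w) =
      fun φ => ∑ x, (log (p φ x) - log (p φ₀ x) + 1) * fderiv ℝ (p · x) φ w := by
    funext φ
    simp [(hasFDerivAt_klDiv (hp φ) (hp φ₀) fun x => hd x φ).fderiv, log_div (hp φ _) (hp φ₀ _)]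
  have hsummand : ∀ x, HasFDerivAt
      (fun φ => (log (p φ x) - log (p φ₀ x) + 1) * fderiv ℝ (p · x) φ w)
      (fderiv ℝ (fun φ => fderiv ℝ (p · x) φ w) φ₀ +
        fderiv ℝ (p · x) φ₀ w • fderiv ℝ (fun φ => log (p φ x)) φ₀) φ₀ := fun x => by
    have hlog := ((hd x φ₀).log (hp φ₀ x)).hasFDerivAt
    exact ((hlog.sub_const (log (p φ₀ x))).add_const 1).fun_mul (hd2 x).hasFDerivAt
      |>.congr_fderiv (by simp)
  have hsecond : ∑ x, fderiv ℝ (fun φ => fderiv ℝ (p · x) φ w) φ₀ = 0 :=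
    sum_fderiv_eq_zero_of_sum_eq_const (c := 0) (fun φ => by
      rw [← sum_apply, sum_fderiv_eq_zero_of_sum_eq_const hp1 fun x => hd x φ, zero_apply])
      hd2
  rw [hK, (HasFDerivAt.fun_sum fun x _ => hsummand x).fderiv, Finset.sum_add_distrib,
    hsecond, zero_add, sum_apply]
  refine Finset.sum_congr rfl fun x _ => ?_
  simp only [smul_apply, smul_eq_mul, fderiv.log (hd x φ₀) (hp φ₀ x)]
  field_simp

end

theorem kl_hessian_eq_fisher_general {n : ℕ} {X : Type} [Fintype X]
    (p : (Fin n → ℝ) → X → ℝ)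
    (hp0 : ∀ φ x, 0 < p φ x) (hp1 : ∀ φ, ∑ x : X, p φ x = 1)
    (hpC : ∀ x, ContDiff ℝ 2 fun φ : Fin n → ℝ => p φ x)
    (φ₀ : Fin n → ℝ) :
    (∑ x : X, p φ₀ x * Real.log (p φ₀ x / p φ₀ x)) = 0 ∧
    fderiv ℝ (fun φ : Fin n → ℝ => ∑ x : X, p φ x * Real.log (p φ x / p φ₀ x)) φ₀ = 0 ∧
    ∀ i j : Fin n,
      fderiv ℝ (fun φ : Fin n → ℝ =>
          fderiv ℝ (fun φ' : Fin n → ℝ =>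
            ∑ x : X, p φ' x * Real.log (p φ' x / p φ₀ x)) φ (Pi.single j 1)) φ₀
          (Pi.single i 1)
        =
      ∑ x : X, p φ₀ x *
        (fderiv ℝ (fun φ : Fin n → ℝ => Real.log (p φ x)) φ₀ (Pi.single i 1) *
          fderiv ℝ (fun φ : Fin n → ℝ => Real.log (p φ x)) φ₀ (Pi.single j 1)) := by
  have hp : ∀ φ x, p φ x ≠ 0 := fun φ x => (hp0 φ x).ne'
  have hd : ∀ x, Differentiable ℝ (p · x) := fun x => (hpC x).differentiable two_ne_zero
  refine ⟨klDiv_self, fderiv_klDiv_self (hp φ₀) hp1 fun x => hd x φ₀, fun i j => ?_⟩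
  have hd2 : ∀ x, DifferentiableAt ℝ (fun φ => fderiv ℝ (p · x) φ (Pi.single j 1)) φ₀ :=
    fun x => (((hpC x).fderiv_right le_rfl).clm_apply contDiff_const).differentiable
      one_ne_zero φ₀
  exact fderiv_fderiv_klDiv_self_apply hp hp1 hd hd2 _

/-- The Hessian of the Kullback–Leibler divergence equals the
Fisher information matrix: for a smooth strictly positive parametrized family of
probability mass functions `p` on a finite nonempty set `X` and
`K(φ) = ∑_x p(φ,x) log (p(φ,x)/p(φ₀,x))`, one has `K(φ₀) = 0`, `∇K(φ₀) = 0`, and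
`∇²K(φ₀) = ∑_x p(φ₀,x) ∇ log p(φ₀,x) (∇ log p(φ₀,x))ᵀ` (stated entrywise). -/
theorem kl_hessian_eq_fisher {n : ℕ} {X : Type} [Fintype X] [Nonempty X]
    (p : (Fin n → ℝ) → X → ℝ)
    (hp0 : ∀ φ x, 0 < p φ x) (hp1 : ∀ φ, ∑ x : X, p φ x = 1)
    (hpC : ∀ x, ContDiff ℝ 2 fun φ : Fin n → ℝ => p φ x)
    (φ₀ : Fin n → ℝ) :
    (∑ x : X, p φ₀ x * Real.log (p φ₀ x / p φ₀ x)) = 0 ∧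
    fderiv ℝ (fun φ : Fin n → ℝ => ∑ x : X, p φ x * Real.log (p φ x / p φ₀ x)) φ₀ = 0 ∧
    ∀ i j : Fin n,
      fderiv ℝ (fun φ : Fin n → ℝ =>
          fderiv ℝ (fun φ' : Fin n → ℝ =>
            ∑ x : X, p φ' x * Real.log (p φ' x / p φ₀ x)) φ (Pi.single j 1)) φ₀
          (Pi.single i 1)
        =
      ∑ x : X, p φ₀ x *
        (fderiv ℝ (fun φ : Fin n → ℝ => Real.log (p φ x)) φ₀ (Pi.single i 1) *
          fderiv ℝ (fun φ : Fin n → ℝ => Real.log (p φ x)) φ₀ (Pi.single j 1)) :=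
  kl_hessian_eq_fisher_general p hp0 hp1 hpC φ₀
end
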